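/- arXiv:1709.02919 — 10 statements merged into one kernel-verified Lean document; each statement's English description precedes it below -/
import Mathlib

section
/- There exist absolute constants c, C > 0 with the following property. Let ε ∈ (0, 1/4], let n and r be positive integers with n ≥ C·ε^{-2}, and let S be a real r × n matrix. Suppose there is a function f mapping ℝ^r to finite subsets of {1,…,n} such that for every nonzero vector x ∈ ℝ^n with all coordinates nonnegative, f(Sx) contains every index i with x_i ≥ ε·‖x‖₁ and contains no index i with x_i < (ε/2)·‖x‖₁. Then r ≥ c·ε^{-2}. -/
/-!
If a sketch `S` recovers heavy hitters, then every kernel vector `z` of `S` that vanishes at some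
coordinate `j₀` is flat: `|z i| ≤ ε ‖z‖₁`. Otherwise, splitting `z` into its positive and negative
parts and adding the same mass at `j₀` to both gives two nonnegative inputs with the same sketch,
where `i` is `ε`-heavy in the first and absent from the second.

A subspace `V ⊆ ℝᵐ` of flat vectors has dimension at most `ε²m²`: the diagonal entries
`Pᵢᵢ = ‖P eᵢ‖₂²` of the orthogonal projection `P` onto `V` sum to `dim V`, and since `P eᵢ ∈ V`,
`Pᵢᵢ ≤ ε ‖P eᵢ‖₁ ≤ ε √m ‖P eᵢ‖₂`, i.e. `Pᵢᵢ ≤ ε²m`.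

Restricting `S` to `m ≈ 1/(4ε²) < n` of its columns, its kernel has dimension at least `m - r`
and at most `ε²m² ≤ m/2`, so `r ≥ m/2 ≥ 1/(8ε²)`.
-/

open Finset Module Matrix

theorem finrank_le_of_forall_abs_le_mul_sum_abs {ι : Type*} [Fintype ι] {ε : ℝ}
    (V : Submodule ℝ (EuclideanSpace ℝ ι)) (hV : ∀ z ∈ V, ∀ i, |z i| ≤ ε * ∑ j, |z j|) :
    (finrank ℝ V : ℝ) ≤ ε ^ 2 * Fintype.card ι ^ 2 := by
  set P := V.starProjection
  set b := EuclideanSpace.basisFun ι ℝ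
  have hP : LinearMap.IsProj V (P : EuclideanSpace ℝ ι →ₗ[ℝ] EuclideanSpace ℝ ι) :=
    ⟨V.starProjection_apply_mem, fun _ => Submodule.starProjection_eq_self_iff.2⟩
  have htrace : (finrank ℝ V : ℝ) = ∑ i, P (b i) i := by
    rw [← hP.trace, LinearMap.trace_eq_sum_inner _ b]
    refine sum_congr rfl fun i _ => ?_
    rw [real_inner_comm, EuclideanSpace.inner_basisFun_real]
    rfl
  have hdiag : ∀ i, P (b i) i ≤ ε ^ 2 * Fintype.card ι := by
    intro i
    set w := P (b i)
    have hwV : w ∈ V := V.starProjection_apply_mem _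
    have hw : w i = ∑ j, w j ^ 2 := by
      rw [← EuclideanSpace.real_norm_sq_eq, ← real_inner_self_eq_norm_sq,
        ← EuclideanSpace.inner_basisFun_real]
      conv_lhs => rw [← Submodule.starProjection_eq_self_iff.2 hwV]
      rw [Submodule.inner_starProjection_left_eq_right]
    have hCS : (∑ j, |w j|) ^ 2 ≤ Fintype.card ι * ∑ j, w j ^ 2 := by
      simpa only [sq_abs, card_univ] using
        sq_sum_le_card_mul_sum_sq (s := univ) (f := fun j => |w j|)
    have hsq : w i ^ 2 ≤ ε ^ 2 * Fintype.card ι * w i := by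
      calc w i ^ 2 = |w i| ^ 2 := (sq_abs _).symm
        _ ≤ (ε * ∑ j, |w j|) ^ 2 := pow_le_pow_left₀ (abs_nonneg _) (hV w hwV i) 2
        _ ≤ ε ^ 2 * Fintype.card ι * w i := by rw [mul_pow, hw, mul_assoc]; gcongr
    have hc : 0 ≤ ε ^ 2 * (Fintype.card ι : ℝ) := by positivity
    by_contra! h
    nlinarith [mul_lt_mul_of_pos_right h (hc.trans_lt h)]
  calc (finrank ℝ V : ℝ) = ∑ i, P (b i) i := htrace
    _ ≤ ∑ _i : ι, ε ^ 2 * Fintype.card ι := sum_le_sum fun i _ => hdiag i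
    _ = ε ^ 2 * Fintype.card ι ^ 2 := by simp; ring

theorem LinearMap.finrank_le_finrank_ker_add_finrank {K V W : Type*} [DivisionRing K]
    [AddCommGroup V] [Module K V] [AddCommGroup W] [Module K W] [FiniteDimensional K V]
    [FiniteDimensional K W] (T : V →ₗ[K] W) :
    finrank K V ≤ finrank K (ker T) + finrank K W := by
  rw [← T.finrank_range_add_finrank_ker, add_comm]
  exact Nat.add_le_add_left (Submodule.finrank_le _) _

def RecoversHeavyHitters {ι κ : Type*} [Fintype ι] (ε : ℝ) (S : Matrix κ ι ℝ)
    (f : (κ → ℝ) → Finset ι) : Prop :=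
  ∀ x : ι → ℝ, x ≠ 0 → (∀ i, 0 ≤ x i) →
    (∀ i, ε * ∑ j, |x j| ≤ x i → i ∈ f (S *ᵥ x)) ∧
    (∀ i, x i < ε / 2 * ∑ j, |x j| → i ∉ f (S *ᵥ x))

namespace RecoversHeavyHitters

variable {ι κ : Type*} [Fintype ι] {ε : ℝ} {S : Matrix κ ι ℝ} {f : (κ → ℝ) → Finset ι}

theorem le_of_mulVec_eq (hf : RecoversHeavyHitters ε S f) {x y : ι → ℝ}
    (hx : x ≠ 0) (hy : y ≠ 0) (hx₀ : ∀ i, 0 ≤ x i) (hy₀ : ∀ i, 0 ≤ y i)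
    (hxy : S *ᵥ x = S *ᵥ y) {i : ι} (hi : ε * ∑ j, |x j| ≤ x i) :
    ε / 2 * ∑ j, |y j| ≤ y i := by
  rw [RecoversHeavyHitters] at hf
  exact not_lt.1 fun h => (hf y hy hy₀).2 i h (hxy ▸ (hf x hx hx₀).1 i hi)

theorem le_of_mulVec_eq_zero [DecidableEq ι] (hf : RecoversHeavyHitters ε S f) (hε : 0 < ε)
    {z : ι → ℝ} (hz : S *ᵥ z = 0) {j₀ : ι} (hj₀ : z j₀ = 0) (i : ι) :
    z i ≤ ε * ∑ j, |z j| := by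
  by_contra! hi
  set s := z i - ε * ∑ j, (z j)⁺
  have hs : 0 < s := by
    have : ∑ j, (z j)⁺ ≤ ∑ j, |z j| := sum_le_sum fun j _ => max_le (le_abs_self _) (abs_nonneg _)
    have := mul_le_mul_of_nonneg_left this hε.le
    linarith
  have hzi : 0 < z i := lt_of_le_of_lt (mul_nonneg hε.le (sum_nonneg fun j _ => abs_nonneg _)) hi
  have hij : i ≠ j₀ := by
    rintro rfl
    linarith
  -- `x - y = ε • z`, so `S` cannot tell `x` from `y`; the common mass `s` at `j₀` tunes `‖x‖₁`
  -- so that `i` is exactly `ε`-heavy in `x`, while `y i = 0`.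
  set x : ι → ℝ := fun j => ε * (z j)⁺ + if j = j₀ then s else 0
  set y : ι → ℝ := fun j => ε * (z j)⁻ + if j = j₀ then s else 0
  have hx₀ : ∀ j, 0 ≤ x j := fun j => add_nonneg (mul_nonneg hε.le (posPart_nonneg _))
    (by by_cases h : j = j₀ <;> simp [h, hs.le])
  have hy₀ : ∀ j, 0 ≤ y j := fun j => add_nonneg (mul_nonneg hε.le (negPart_nonneg _))
    (by by_cases h : j = j₀ <;> simp [h, hs.le])
  have hx : x ≠ 0 := fun h => by simpa [x, hj₀, hs.ne'] using congrFun h j₀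
  have hy : y ≠ 0 := fun h => by simpa [y, hj₀, hs.ne'] using congrFun h j₀
  have hxy : S *ᵥ x = S *ᵥ y := by
    rw [← sub_eq_zero, ← mulVec_sub]
    have : x - y = ε • z := by
      ext j; simp [x, y, ← mul_sub, posPart_sub_negPart]
    rw [this, mulVec_smul, hz, smul_zero]
  have hxsum : ∑ j, |x j| = z i := by
    simp [x, abs_of_nonneg (hx₀ _), sum_add_distrib, ← mul_sum, s]
  have hxi : x i = ε * z i := by simp [x, hij, posPart_eq_self.2 hzi.le]
  have hyi : y i = 0 := by simp [y, hij, negPart_eq_zero.2 hzi.le]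
  have hlight := hf.le_of_mulVec_eq hx hy hx₀ hy₀ hxy (i := i) (by rw [hxsum, hxi])
  have hysum : s ≤ ∑ j, |y j| := by
    calc s = |y j₀| := by simp [y, hj₀, abs_of_pos hs]
      _ ≤ ∑ j, |y j| := single_le_sum (fun j _ => abs_nonneg (y j)) (mem_univ j₀)
  rw [hyi] at hlight
  nlinarith

theorem abs_le_of_mulVec_eq_zero [DecidableEq ι] (hf : RecoversHeavyHitters ε S f) (hε : 0 < ε)
    {z : ι → ℝ} (hz : S *ᵥ z = 0) {j₀ : ι} (hj₀ : z j₀ = 0) (i : ι) :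
    |z i| ≤ ε * ∑ j, |z j| := by
  refine abs_le.2 ⟨?_, hf.le_of_mulVec_eq_zero hε hz hj₀ i⟩
  have := hf.le_of_mulVec_eq_zero hε (z := -z) (by rw [mulVec_neg, hz, neg_zero])
    (by rw [Pi.neg_apply, hj₀, neg_zero]) i
  simp only [Pi.neg_apply, abs_neg] at this
  linarith

end RecoversHeavyHitters

theorem RecoversHeavyHitters.abs_le_of_submatrix_mulVec_eq_zero {κ : Type*} {ε : ℝ} {m k : ℕ}
    {S : Matrix κ (Fin (m + (k + 1))) ℝ} {f : (κ → ℝ) → Finset (Fin (m + (k + 1)))}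
    (hf : RecoversHeavyHitters ε S f) (hε : 0 < ε) {z : Fin m → ℝ}
    (hz : S.submatrix id (Fin.castAdd (k + 1)) *ᵥ z = 0) (i : Fin m) :
    |z i| ≤ ε * ∑ j, |z j| := by
  have hSz : S *ᵥ Fin.append z 0 = 0 := by
    rw [← hz]
    ext a
    simp [mulVec, dotProduct, Fin.sum_univ_add]
  have := hf.abs_le_of_mulVec_eq_zero hε hSz (j₀ := Fin.natAdd m 0) (by simp) (Fin.castAdd _ i)
  simpa [Fin.sum_univ_add] using this

theorem RecoversHeavyHitters.le_two_mul_card {κ : Type*} [Fintype κ] {ε : ℝ} {m k : ℕ}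
    {S : Matrix κ (Fin (m + (k + 1))) ℝ} {f : (κ → ℝ) → Finset (Fin (m + (k + 1)))}
    (hf : RecoversHeavyHitters ε S f) (hε : 0 < ε) (hεm : ε ^ 2 * m ≤ 1 / 2) :
    (m : ℝ) ≤ 2 * Fintype.card κ := by
  set T := toEuclideanLin (S.submatrix id (Fin.castAdd (k + 1)))
  have hdim : (finrank ℝ (LinearMap.ker T) : ℝ) ≤ ε ^ 2 * m ^ 2 := by
    simpa using finrank_le_of_forall_abs_le_mul_sum_abs (LinearMap.ker T) fun z hz =>
      hf.abs_le_of_submatrix_mulVec_eq_zero hε (by simpa [T, toLpLin_apply] using hz)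
  have hrank : (m : ℝ) ≤ finrank ℝ (LinearMap.ker T) + Fintype.card κ := by
    have := T.finrank_le_finrank_ker_add_finrank
    rw [finrank_euclideanSpace_fin, finrank_euclideanSpace] at this
    exact_mod_cast this
  nlinarith [m.cast_nonneg (α := ℝ)]

/-- Deterministic lower bound in the strict turnstile model under Guarantees 1, 2:
any sketch from which all `ε`-heavy hitters (and no non-`ε/2`-heavy hitters) of every
nonnegative vector can be recovered must have `Ω(ε⁻²)` rows. -/
theorem det_lower_bound_strict_turnstile :
    ∃ c C : ℝ, 0 < c ∧ 0 < C ∧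
      ∀ (ε : ℝ), 0 < ε → ε ≤ 1/4 →
      ∀ (n r : ℕ), 0 < n → 0 < r → (C / ε ^ 2 ≤ (n : ℝ)) →
      ∀ (S : Matrix (Fin r) (Fin n) ℝ)
        (f : (Fin r → ℝ) → Finset (Fin n)),
        (∀ x : Fin n → ℝ, x ≠ 0 → (∀ i, 0 ≤ x i) →
          (∀ i : Fin n, ε * (∑ j, |x j|) ≤ x i → i ∈ f (S.mulVec x)) ∧
          (∀ i : Fin n, x i < (ε / 2) * (∑ j, |x j|) → i ∉ f (S.mulVec x))) →
        c / ε ^ 2 ≤ (r : ℝ) := by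
  refine ⟨1 / 8, 1, by norm_num, by norm_num, ?_⟩
  intro ε hε hε4 n r _ _ hn S f hf
  -- `m` is large enough for `1/(8ε²) ≤ m/2`, small enough for `ε²m ≤ 1/2` and `m < n`.
  set m := ⌈1 / (4 * ε ^ 2)⌉₊
  have hm_ge : 1 / (4 * ε ^ 2) ≤ m := Nat.le_ceil _
  have hm_lt : (m : ℝ) < 1 / (4 * ε ^ 2) + 1 := Nat.ceil_lt_add_one (by positivity)
  have hε2 : ε ^ 2 ≤ 1 / 16 := by nlinarith
  obtain ⟨k, rfl⟩ : ∃ k, n = m + (k + 1) := by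
    have : (m : ℝ) < n := by
      refine hm_lt.trans_le (le_trans ?_ hn)
      rw [div_add_one (by positivity), div_le_div_iff₀ (by positivity) (by positivity)]
      nlinarith
    replace : m < n := by exact_mod_cast this
    exact ⟨n - m - 1, by omega⟩
  have hεm : ε ^ 2 * m ≤ 1 / 2 := by
    calc ε ^ 2 * m ≤ ε ^ 2 * (1 / (4 * ε ^ 2) + 1) := by gcongr
      _ = 1 / 4 + ε ^ 2 := by field_simp
      _ ≤ 1 / 2 := by linarith
  have hmr : (m : ℝ) ≤ 2 * r := by
    simpa using RecoversHeavyHitters.le_two_mul_card (S := S) (f := f) hf hε hεm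
  have hεm' : 1 / 4 ≤ ε ^ 2 * m := by
    rw [div_le_iff₀ (by positivity)] at hm_ge
    linarith
  rw [div_le_iff₀ (by positivity)]
  nlinarith
end

section
/- For every constant K ≥ 1 there exist constants c, C > 0 (depending only on K) with the following property. Let ε ∈ (0, 1/4], let n and r be positive integers with n ≥ C·max(ε^{-2}, K·ε^{-1}), and let S be a real r × n matrix. Suppose there is a function f mapping ℝ^r to finite subsets of {1,…,n} such that |f(y)| ≤ K/ε for every y ∈ ℝ^r, and for every nonzero vector x ∈ ℝ^n, f(Sx) contains every index i with |x_i| ≥ ε·‖x‖₁. Then r ≥ c·ε^{-2}. -/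
/-!
Choose a set `B` of about `1/(4ε²)` coordinates outside `f 0`. A nonzero vector `x` supported
on `B` with `S x = 0` has the same sketch as `0`, so its heavy hitters would lie in `f 0`; hence
it has no `ε`-heavy coordinate. These vectors form a subspace of dimension at least `|B| - r`.
On the other hand, if `P` is the orthogonal projection onto a subspace of vectors supported on
`B` without `ε`-heavy coordinates, each diagonal entry `(P e_j)_j = ‖P e_j‖²` is at most
`ε ‖P e_j‖₁ ≤ ε √|B| ‖P e_j‖`, so the trace of `P`, which is the dimension, is at most
`ε²|B|²`. Thus `r ≥ |B| - ε²|B|² ≥ 3|B|/4`.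
-/

open Finset Module

section FlatSubspace

variable {ι : Type*} [Fintype ι]

theorem sq_norm_le_sq_mul_card_of_sq_norm_le_mul_sum_abs (x : EuclideanSpace ℝ ι) {B : Finset ι}
    (hsupp : ∀ i ∉ B, x i = 0) {ε : ℝ} (h : ‖x‖ ^ 2 ≤ ε * ∑ j, |x j|) :
    ‖x‖ ^ 2 ≤ ε ^ 2 * #B := by
  have hcs : (∑ j, |x j|) ^ 2 ≤ #B * ‖x‖ ^ 2 := by
    have hB : ∑ j, |x j| = ∑ j ∈ B, |x j| :=
      (sum_subset (subset_univ B) fun i _ hi => by rw [hsupp i hi, abs_zero]).symm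
    calc (∑ j, |x j|) ^ 2 = (∑ j ∈ B, |x j|) ^ 2 := by rw [hB]
      _ ≤ #B * ∑ j ∈ B, |x j| ^ 2 := sq_sum_le_card_mul_sum_sq
      _ ≤ #B * ‖x‖ ^ 2 := by
        rw [EuclideanSpace.norm_sq_eq]
        gcongr
        exact sum_le_sum_of_subset_of_nonneg (subset_univ B) fun i _ _ => by positivity
  rcases (sq_nonneg ‖x‖).eq_or_lt with h0 | hpos
  · rw [← h0]; positivity
  · have : (‖x‖ ^ 2) ^ 2 ≤ ε ^ 2 * #B * ‖x‖ ^ 2 :=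
      calc (‖x‖ ^ 2) ^ 2 ≤ (ε * ∑ j, |x j|) ^ 2 := pow_le_pow_left₀ hpos.le h 2
        _ = ε ^ 2 * (∑ j, |x j|) ^ 2 := by ring
        _ ≤ ε ^ 2 * (#B * ‖x‖ ^ 2) := by gcongr
        _ = ε ^ 2 * #B * ‖x‖ ^ 2 := by ring
    nlinarith

variable [DecidableEq ι] (V : Submodule ℝ (EuclideanSpace ℝ ι))

theorem Submodule.starProjection_single_apply_self (j : ι) :
    V.starProjection (EuclideanSpace.single j 1) j =
      ‖V.starProjection (EuclideanSpace.single j (1 : ℝ))‖ ^ 2 := by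
  simpa [real_inner_comm, EuclideanSpace.inner_single_left] using
    V.re_inner_starProjection_eq_normSq (EuclideanSpace.single j (1 : ℝ))

theorem Submodule.sum_sq_norm_starProjection_single :
    ∑ j, ‖V.starProjection (EuclideanSpace.single j (1 : ℝ))‖ ^ 2 = finrank ℝ V := by
  set u := stdOrthonormalBasis ℝ V
  have hu : ∀ k, ‖(u k : EuclideanSpace ℝ ι)‖ = 1 := u.norm_eq_one
  calc ∑ j, ‖V.starProjection (EuclideanSpace.single j (1 : ℝ))‖ ^ 2
      = ∑ j, inner ℝ (EuclideanSpace.basisFun ι ℝ j)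
          (V.starProjection (EuclideanSpace.basisFun ι ℝ j)) := by
        simp [V.starProjection_single_apply_self, EuclideanSpace.inner_single_left]
    _ = LinearMap.trace ℝ _ V.starProjection.toLinearMap :=
        (LinearMap.trace_eq_sum_inner _ _).symm
    _ = finrank ℝ V := by
        rw [u.starProjection_eq_sum_rankOne]
        simp [InnerProductSpace.trace_rankOne, hu]

theorem Submodule.finrank_le_sq_mul_card_sq_of_abs_le {B : Finset ι} {ε : ℝ}
    (hsupp : ∀ x ∈ V, ∀ i ∉ B, x i = 0)
    (hflat : ∀ x ∈ V, ∀ i ∈ B, |x i| ≤ ε * ∑ j, |x j|) :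
    (finrank ℝ V : ℝ) ≤ ε ^ 2 * #B ^ 2 := by
  set p : ι → EuclideanSpace ℝ ι := fun j => V.starProjection (EuclideanSpace.single j 1)
  have hmem (j : ι) : p j ∈ V := V.starProjection_apply_mem _
  have hdiag (j : ι) : p j j = ‖p j‖ ^ 2 := V.starProjection_single_apply_self j
  have hoff (j : ι) (hj : j ∉ B) : ‖p j‖ ^ 2 = 0 := by
    rw [← hdiag, hsupp _ (hmem j) j hj]
  have hon (j : ι) (hj : j ∈ B) : ‖p j‖ ^ 2 ≤ ε ^ 2 * #B := by
    refine sq_norm_le_sq_mul_card_of_sq_norm_le_mul_sum_abs _ (hsupp _ (hmem j)) ?_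
    rw [← hdiag]
    exact (le_abs_self _).trans (hflat _ (hmem j) j hj)
  calc (finrank ℝ V : ℝ) = ∑ j, ‖p j‖ ^ 2 := V.sum_sq_norm_starProjection_single.symm
    _ = ∑ j ∈ B, ‖p j‖ ^ 2 := (sum_subset (subset_univ B) fun j _ hj => hoff j hj).symm
    _ ≤ ∑ _j ∈ B, ε ^ 2 * #B := sum_le_sum hon
    _ = ε ^ 2 * #B ^ 2 := by rw [sum_const, nsmul_eq_mul]; ring

end FlatSubspace

section SupportedKernel

variable {m ι : Type*} [Fintype ι] [DecidableEq ι]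

def Matrix.supportedKer (S : Matrix m ι ℝ) (B : Finset ι) :
    Submodule ℝ (EuclideanSpace ℝ ι) :=
  LinearMap.ker ((S.mulVecLin.prod (LinearMap.funLeft ℝ ℝ ((↑) : ↥Bᶜ → ι))) ∘ₗ
    (WithLp.linearEquiv 2 ℝ (ι → ℝ)).toLinearMap)

theorem Matrix.mem_supportedKer {S : Matrix m ι ℝ} {B : Finset ι} {x : EuclideanSpace ℝ ι} :
    x ∈ S.supportedKer B ↔ S.mulVec x.ofLp = 0 ∧ ∀ i ∉ B, x i = 0 := by
  simp [Matrix.supportedKer, funext_iff, LinearMap.funLeft]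

theorem Matrix.card_le_finrank_supportedKer_add_card [Fintype m] (S : Matrix m ι ℝ)
    (B : Finset ι) :
    #B ≤ finrank ℝ (S.supportedKer B) + Fintype.card m := by
  set Φ := (S.mulVecLin.prod (LinearMap.funLeft ℝ ℝ ((↑) : ↥Bᶜ → ι))) ∘ₗ
    (WithLp.linearEquiv 2 ℝ (ι → ℝ)).toLinearMap
  have hrank := Φ.finrank_range_add_finrank_ker
  have hrange := Submodule.finrank_le (LinearMap.range Φ)
  simp only [finrank_euclideanSpace, finrank_prod, finrank_fintype_fun_eq_card,
    Fintype.card_coe, card_compl] at hrank hrange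
  have := card_le_univ B
  change #B ≤ finrank ℝ (LinearMap.ker Φ) + Fintype.card m
  omega

end SupportedKernel

theorem card_le_sq_mul_card_sq_add_card_of_recovers_heavy {m ι : Type*} [Fintype m] [Fintype ι]
    [DecidableEq ι] (S : Matrix m ι ℝ) (f : (m → ℝ) → Finset ι) {ε : ℝ}
    (hrec : ∀ x : ι → ℝ, x ≠ 0 → ∀ i, ε * ∑ j, |x j| ≤ |x i| →
      i ∈ f (S.mulVec x))
    {B : Finset ι} (hB : Disjoint B (f 0)) :
    (#B : ℝ) ≤ ε ^ 2 * #B ^ 2 + Fintype.card m := by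
  have hflat : ∀ x ∈ S.supportedKer B, ∀ i ∈ B, |x i| ≤ ε * ∑ j, |x j| := by
    intro x hx i hi
    by_contra! hheavy
    have hx0 : x.ofLp ≠ 0 := fun h => by simp [h] at hheavy
    have hi0 := hrec x.ofLp hx0 i hheavy.le
    rw [(Matrix.mem_supportedKer.1 hx).1] at hi0
    exact disjoint_left.1 hB hi hi0
  have hdim := (S.supportedKer B).finrank_le_sq_mul_card_sq_of_abs_le
    (fun x hx => (Matrix.mem_supportedKer.1 hx).2) hflat
  have hcount : (#B : ℝ) ≤ finrank ℝ (S.supportedKer B) + Fintype.card m := by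
    exact_mod_cast S.card_le_finrank_supportedKer_add_card B
  linarith

/-- Deterministic lower bound in the general turnstile model under Guarantee 3:
any sketch from which one can always recover a set of size at most `K/ε` containing
all `ε`-heavy hitters (in ℓ₁ norm) of every real vector must have `Ω(ε⁻²)` rows. -/
theorem det_lower_bound_turnstile_guarantee3 :
    ∀ K : ℝ, 1 ≤ K →
    ∃ c C : ℝ, 0 < c ∧ 0 < C ∧
      ∀ (ε : ℝ), 0 < ε → ε ≤ 1/4 →
      ∀ (n r : ℕ), 0 < n → 0 < r →
        (C * max (ε⁻¹ ^ 2) (K * ε⁻¹) ≤ (n : ℝ)) →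
      ∀ (S : Matrix (Fin r) (Fin n) ℝ)
        (f : (Fin r → ℝ) → Finset (Fin n)),
        (∀ y : Fin r → ℝ, ((f y).card : ℝ) ≤ K / ε) →
        (∀ x : Fin n → ℝ, x ≠ 0 →
          ∀ i : Fin n, ε * (∑ j, |x j|) ≤ |x i| → i ∈ f (S.mulVec x)) →
        c / ε ^ 2 ≤ (r : ℝ) := by
  intro K _
  refine ⟨3 / 32, 2, by norm_num, by norm_num, ?_⟩
  intro ε hε hε4 n r _ _ hn S f hcard hrec
  set b := ⌊(4 * ε ^ 2)⁻¹⌋₊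
  have hb_le : (b : ℝ) ≤ (4 * ε ^ 2)⁻¹ := Nat.floor_le (by positivity)
  have hb_gt : (4 * ε ^ 2)⁻¹ / 2 < (b : ℝ) :=
    Nat.div_two_lt_floor ((one_le_inv₀ (by positivity)).2 (by nlinarith))
  have hroom : b + #(f 0) ≤ n := by
    have hb_inv : (b : ℝ) ≤ ε⁻¹ ^ 2 := hb_le.trans <| by
      rw [mul_inv, inv_pow]; linarith [inv_nonneg.2 (sq_nonneg ε)]
    have : (b : ℝ) + #(f 0) ≤ n := by
      linarith [hcard 0, div_eq_mul_inv K ε, le_max_left (ε⁻¹ ^ 2) (K * ε⁻¹),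
        le_max_right (ε⁻¹ ^ 2) (K * ε⁻¹)]
    exact_mod_cast this
  obtain ⟨B, hB, hBcard⟩ := exists_subset_card_eq (s := (f 0)ᶜ) (n := b)
    (by rw [card_compl, Fintype.card_fin]; omega)
  have hsketch := card_le_sq_mul_card_sq_add_card_of_recovers_heavy S f hrec
    (subset_compl_iff_disjoint_right.1 hB)
  rw [hBcard, Fintype.card_fin] at hsketch
  have hεb : ε ^ 2 * b ≤ 1 / 4 := by
    calc ε ^ 2 * b ≤ ε ^ 2 * (4 * ε ^ 2)⁻¹ := by gcongr
      _ = 1 / 4 := by field_simp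
  have hinv : 3 / 32 / ε ^ 2 = 3 / 4 * ((4 * ε ^ 2)⁻¹ / 2) := by field_simp; ring
  nlinarith
end

section
/- Let r be a positive integer and τ ∈ ℝ^r. Then the total variation distance between the standard Gaussian measure N(0, I_r) on ℝ^r and its shift N(τ, I_r) (the distribution of τ + g with g ∼ N(0, I_r)) equals the probability that a standard real Gaussian g ∼ N(0,1) satisfies |g| ≤ ‖τ‖₂/2. -/
/-!
The shifted measure `N(τ, I)` has density `exp(⟨τ, x⟩ - ‖τ‖² / 2)` with respect to `N(0, I)`, so by
Scheffé's identity the total variation distance is `N(0, I)(A) - N(τ, I)(A)` for the half-space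
`A = {⟨τ, x⟩ ≤ ‖τ‖² / 2}` where this density is at most one. Under both measures `⟨τ, x⟩` is a real
Gaussian of variance `‖τ‖²`, centred at `0` and at `‖τ‖²` respectively, so the difference is the
`N(0, ‖τ‖²)`-mass of `(-‖τ‖² / 2, ‖τ‖² / 2]`; rescaling by `‖τ‖` gives the claim.
-/

open MeasureTheory ProbabilityTheory

/-- Total variation distance between probability measures:
`sup_A |μ(A) − ν(A)|` over measurable sets `A`. -/
noncomputable def tvDist {Ω : Type*} [MeasurableSpace Ω] (μ ν : Measure Ω) : ℝ :=
  ⨆ A : {A : Set Ω // MeasurableSet A}, |(μ (A : Set Ω)).toReal - (ν (A : Set Ω)).toReal|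

open Real Set
open scoped NNReal ENNReal

section TotalVariation

variable {Ω : Type*} [MeasurableSpace Ω] {μ ν : Measure Ω}
  [IsProbabilityMeasure μ] [IsProbabilityMeasure ν]

lemma tvDist_eq_of_forall_sub_le {A : Set Ω} (hA : MeasurableSet A)
    (hmax : ∀ B, MeasurableSet B → μ.real B - ν.real B ≤ μ.real A - ν.real A) :
    tvDist μ ν = μ.real A - ν.real A := by
  have habs (B : Set Ω) (hB : MeasurableSet B) : |μ.real B - ν.real B| ≤ μ.real A - ν.real A := by
    have hcompl := hmax Bᶜ hB.compl
    rw [probReal_compl_eq_one_sub hB, probReal_compl_eq_one_sub hB] at hcompl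
    exact abs_le.mpr ⟨by linarith, hmax B hB⟩
  refine le_antisymm (ciSup_le fun B => habs B.1 B.2) ?_
  have hbdd : BddAbove (Set.range fun B : {B : Set Ω // MeasurableSet B} =>
      |μ.real B - ν.real B|) :=
    ⟨_, Set.forall_mem_range.mpr fun B => habs B.1 B.2⟩
  exact (le_abs_self _).trans (le_ciSup hbdd ⟨A, hA⟩)

lemma tvDist_eq_of_eq_withDensity {ρ : Ω → ℝ≥0∞} (hρ : Measurable ρ)
    (hν : ν = μ.withDensity ρ) :
    tvDist μ ν = μ.real {x | ρ x ≤ 1} - ν.real {x | ρ x ≤ 1} := by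
  set A := {x | ρ x ≤ 1}
  have hA : MeasurableSet A := measurableSet_le hρ measurable_const
  have hνS {S : Set Ω} (hS : MeasurableSet S) : ν S = ∫⁻ x in S, ρ x ∂μ := by
    rw [hν, withDensity_apply ρ hS]
  have hle_in {S : Set Ω} (hS : MeasurableSet S) (hSA : S ⊆ A) : ν.real S ≤ μ.real S := by
    refine ENNReal.toReal_mono (measure_ne_top _ _) ?_
    rw [hνS hS, ← setLIntegral_one]
    exact setLIntegral_mono measurable_const fun x hx => hSA hx
  have hle_out {S : Set Ω} (hS : MeasurableSet S) (hSA : S ⊆ Aᶜ) : μ.real S ≤ ν.real S := by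
    refine ENNReal.toReal_mono (measure_ne_top _ _) ?_
    rw [hνS hS, ← setLIntegral_one]
    exact setLIntegral_mono hρ fun x hx => (lt_of_not_ge (show ¬ ρ x ≤ 1 from hSA hx)).le
  refine tvDist_eq_of_forall_sub_le hA fun B hB => ?_
  have hout := hle_out (hB.diff hA) (Set.sdiff_subset_compl B A)
  have hin := hle_in (hA.diff hB) Set.sdiff_subset
  rw [← measureReal_inter_add_sdiff (s := B) hA, ← measureReal_inter_add_sdiff (s := B) hA,
    ← measureReal_inter_add_sdiff (s := A) hB, ← measureReal_inter_add_sdiff (s := A) hB,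
    Set.inter_comm A B]
  linarith

end TotalVariation

lemma gaussianReal_eq_withDensity (m : ℝ) {v : ℝ≥0} (hv : v ≠ 0) :
    gaussianReal m v =
      (gaussianReal 0 v).withDensity fun x => ENNReal.ofReal (exp ((m * x - m ^ 2 / 2) / v)) := by
  rw [gaussianReal_of_var_ne_zero m hv, gaussianReal_of_var_ne_zero 0 hv,
    ← withDensity_mul _ (measurable_gaussianPDF 0 v) (by fun_prop)]
  congr 1
  ext x
  rw [Pi.mul_apply, gaussianPDF, gaussianPDF, ← ENNReal.ofReal_mul (gaussianPDFReal_nonneg _ _ _),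
    gaussianPDFReal, gaussianPDFReal, mul_assoc (b := rexp _), ← exp_add]
  congr 3
  have : (v : ℝ) ≠ 0 := by exact_mod_cast hv
  field_simp
  ring

lemma Set.indicator_univ_pi_prod {ι : Type*} [Fintype ι] {α : ι → Type*} {M : Type*}
    [CommMonoidWithZero M] (s : ∀ i, Set (α i)) (f : ∀ i, α i → M) (x : ∀ i, α i) :
    (Set.univ.pi s).indicator (fun x => ∏ i, f i (x i)) x = ∏ i, (s i).indicator (f i) (x i) := by
  by_cases hx : x ∈ Set.univ.pi s
  · rw [Set.indicator_of_mem hx]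
    exact Finset.prod_congr rfl fun i _ => (Set.indicator_of_mem (hx i trivial) _).symm
  · obtain ⟨i, hi⟩ := by simpa [Set.mem_univ_pi] using hx
    rw [Set.indicator_of_notMem hx,
      Finset.prod_eq_zero (Finset.mem_univ i) (Set.indicator_of_notMem hi _)]

section Pi

variable {ι : Type*} [Fintype ι] {α : ι → Type*} [∀ i, MeasurableSpace (α i)]
  (μ : ∀ i, Measure (α i)) [∀ i, IsProbabilityMeasure (μ i)] {f : ∀ i, α i → ℝ≥0∞}

lemma lintegral_pi_prod_eq_prod (hf : ∀ i, Measurable (f i)) :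
    ∫⁻ x, ∏ i, f i (x i) ∂Measure.pi μ = ∏ i, ∫⁻ y, f i y ∂μ i := by
  rw [lintegral_prod_eq_prod_lintegral_of_indepFun _ _ (iIndepFun_pi fun i => (hf i).aemeasurable)
    fun i => (hf i).comp (measurable_pi_apply i)]
  exact Finset.prod_congr rfl fun i _ => (measurePreserving_eval μ i).lintegral_comp (hf i)

lemma Measure.pi_withDensity (hf : ∀ i, Measurable (f i))
    [∀ i, SigmaFinite ((μ i).withDensity (f i))] :
    Measure.pi (fun i => (μ i).withDensity (f i)) =
      (Measure.pi μ).withDensity fun x => ∏ i, f i (x i) := by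
  refine Measure.pi_eq fun s hs => ?_
  simp_rw [withDensity_apply _ (.univ_pi hs), ← lintegral_indicator (.univ_pi hs),
    Set.indicator_univ_pi_prod, lintegral_pi_prod_eq_prod μ fun i => (hf i).indicator (hs i),
    lintegral_indicator (hs _), withDensity_apply _ (hs _)]

end Pi

lemma pi_gaussianReal_map_add_eq_withDensity {ι : Type*} [Fintype ι] (τ : ι → ℝ) :
    (Measure.pi fun _ : ι => gaussianReal 0 1).map (fun g i => τ i + g i) =
      (Measure.pi fun _ : ι => gaussianReal 0 1).withDensity
        fun x => ENNReal.ofReal (exp (∑ i, τ i * x i - (∑ i, τ i ^ 2) / 2)) := by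
  rw [Measure.pi_map_pi fun i => (measurable_const_add (τ i)).aemeasurable]
  have hshift (i : ι) : (gaussianReal 0 1).map (τ i + ·) = (gaussianReal 0 1).withDensity
      fun x => ENNReal.ofReal (exp (τ i * x - τ i ^ 2 / 2)) := by
    rw [gaussianReal_map_const_add, zero_add, gaussianReal_eq_withDensity _ one_ne_zero]
    simp
  simp_rw [hshift]
  rw [Measure.pi_withDensity _ fun i => by fun_prop]
  congr with x
  rw [← ENNReal.ofReal_prod_of_nonneg fun i _ => (exp_pos _).le, ← exp_sum, Finset.sum_div,
    ← Finset.sum_sub_distrib]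

lemma pi_gaussianReal_map_sum_mul {ι : Type*} [Fintype ι] (τ : ι → ℝ) :
    (Measure.pi fun _ : ι => gaussianReal 0 1).map (fun x => ∑ i, τ i * x i) =
      gaussianReal 0 (∑ i, τ i ^ 2).toNNReal := by
  set L : StrongDual ℝ (EuclideanSpace ℝ ι) := innerSL ℝ (WithLp.toLp 2 τ)
  have hL : (fun x : ι → ℝ => ∑ i, τ i * x i) = L ∘ WithLp.toLp 2 := by
    ext x; simp [L, PiLp.inner_apply, mul_comm]
  rw [hL, ← Measure.map_map L.continuous.measurable (by fun_prop), map_pi_eq_stdGaussian,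
    IsGaussian.map_eq_gaussianReal, integral_strongDual_stdGaussian, variance_dual_stdGaussian,
    innerSL_apply_norm, EuclideanSpace.norm_eq, sq_sqrt (by positivity)]
  simp

lemma gaussianReal_sq_Iic_sub_Iic_neg {t : ℝ} (ht : 0 ≤ t) :
    (gaussianReal 0 (t ^ 2).toNNReal).real (Iic (t ^ 2 / 2)) -
        (gaussianReal 0 (t ^ 2).toNNReal).real (Iic (-(t ^ 2 / 2))) =
      (gaussianReal 0 1).real {g | |g| ≤ t / 2} := by
  have := nullSingletonClass_gaussianReal (μ := 0) one_ne_zero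
  obtain rfl | ht := ht.eq_or_lt
  · simp [Measure.real, measure_singleton]
  have hscale : gaussianReal 0 (t ^ 2).toNNReal = (gaussianReal 0 1).map (t * ·) := by
    rw [gaussianReal_map_const_mul, mul_zero, mul_one]
    congr 1
    ext
    simp [sq_nonneg]
  have hinterval : {g : ℝ | |g| ≤ t / 2} = Icc (-(t / 2)) (t / 2) := by
    ext; exact abs_le (b := t / 2)
  rw [← Iic_union_Ioc_eq_Iic (by linarith [sq_nonneg t] : -(t ^ 2 / 2) ≤ t ^ 2 / 2),
    measureReal_union (Iic_disjoint_Ioc le_rfl) measurableSet_Ioc, add_sub_cancel_left, hscale,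
    map_measureReal_apply (measurable_const_mul t) measurableSet_Ioc,
    preimage_const_mul_Ioc₀ _ _ ht, hinterval, measureReal_congr Ioc_ae_eq_Icc]
  congr 2 <;> field_simp

theorem tv_between_gaussians_general (r : ℕ) (τ : Fin r → ℝ) :
    tvDist (Measure.pi fun _ : Fin r => gaussianReal 0 1)
        (Measure.map (fun g : Fin r → ℝ => fun i => τ i + g i)
          (Measure.pi fun _ : Fin r => gaussianReal 0 1)) =
      ((gaussianReal 0 1) {g : ℝ | |g| ≤ Real.sqrt (∑ i, (τ i)^2) / 2}).toReal := by
  set μ := Measure.pi fun _ : Fin r => gaussianReal 0 1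
  set T := ∑ i, τ i ^ 2
  set L : (Fin r → ℝ) → ℝ := fun x => ∑ i, τ i * x i
  have hL : Measurable L := by fun_prop
  have hshift : Measurable fun (g : Fin r → ℝ) i => τ i + g i := by fun_prop
  have := Measure.isProbabilityMeasure_map (μ := μ) hshift.aemeasurable
  have hlevel : {x | ENNReal.ofReal (exp (L x - T / 2)) ≤ 1} = L ⁻¹' Iic (T / 2) := by
    ext x
    simp
  have hshift_level :
      (fun g i => τ i + g i) ⁻¹' (L ⁻¹' Iic (T / 2)) = L ⁻¹' Iic (-(T / 2)) := by
    ext g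
    simp only [mem_preimage, mem_Iic, L, T, mul_add, Finset.sum_add_distrib, ← sq]
    constructor <;> intro <;> linarith
  have hlaw (c : ℝ) : μ.real (L ⁻¹' Iic c) = (gaussianReal 0 T.toNNReal).real (Iic c) := by
    rw [← map_measureReal_apply hL measurableSet_Iic, pi_gaussianReal_map_sum_mul]
  have hscaled := gaussianReal_sq_Iic_sub_Iic_neg (sqrt_nonneg T)
  rw [sq_sqrt (by positivity)] at hscaled
  rw [tvDist_eq_of_eq_withDensity (by fun_prop) (pi_gaussianReal_map_add_eq_withDensity τ), hlevel,
    map_measureReal_apply hshift (hL measurableSet_Iic), hshift_level, hlaw, hlaw, hscaled]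
  rfl

/-- The total variation distance between `N(0, I_r)` and its shift `N(τ, I_r)` equals
the probability that a standard real Gaussian `g` satisfies `|g| ≤ ‖τ‖₂ / 2`. -/
theorem tv_between_gaussians (r : ℕ) (hr : 0 < r) (τ : Fin r → ℝ) :
    tvDist (Measure.pi fun _ : Fin r => gaussianReal 0 1)
        (Measure.map (fun g : Fin r → ℝ => fun i => τ i + g i)
          (Measure.pi fun _ : Fin r => gaussianReal 0 1)) =
      ((gaussianReal 0 1) {g : ℝ | |g| ≤ Real.sqrt (∑ i, (τ i)^2) / 2}).toReal :=
  tv_between_gaussians_general r τ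
end

section
/- Let S be a real r × n matrix with orthonormal rows (S·Sᵀ = I_r). Then there exists an index i ∈ {1,…,n} such that both ‖SᵀS·e_i‖₂² ≤ 2r/n and ‖SᵀS·e_i‖₁ ≤ 2√r, where e_i is the i-th standard basis vector of ℝ^n. -/
open Finset
open scoped Matrix

/-!
`P = SᵀS` is a symmetric idempotent of trace `r`, so the squared entries of `P` sum to
`tr (PᵀP) = tr P = r`. Cauchy–Schwarz in each column, and once more across the columns, bounds
the total ℓ₁ mass of the columns by `n√r`. Both totals are thus at most `n` times the averages
`r/n` and `√r`, and an index where neither exceeds twice its average exists because the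
normalised sum `fᵢ/(2a) + gᵢ/(2b)` has average at most `1`.
-/

theorem Matrix.sum_sq_transpose_mul_self_apply {R m n : Type*} [CommRing R] [Fintype m]
    [Fintype n] [DecidableEq m] (S : Matrix m n R) (hS : S * Sᵀ = 1) :
    ∑ i, ∑ j, (Sᵀ * S) j i ^ 2 = Fintype.card m := by
  set P := Sᵀ * S
  have hP_symm : Pᵀ = P := by simp [P, Matrix.transpose_mul]
  have hP_idem : P * P = P := by
    simp only [P, Matrix.mul_assoc, ← Matrix.mul_assoc S, hS, Matrix.one_mul]
  calc ∑ i, ∑ j, P j i ^ 2 = (P * P).trace := by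
        simp only [Matrix.trace, Matrix.diag, Matrix.mul_apply, sq]
        refine sum_congr rfl fun i _ => sum_congr rfl fun j _ => ?_
        rw [← Matrix.transpose_apply P i j, hP_symm]
    _ = (S * Sᵀ).trace := by rw [hP_idem, Matrix.trace_mul_comm]
    _ = Fintype.card m := by simp [hS]

theorem Real.sum_abs_le_sqrt_card_mul_sqrt_sum_sq {ι : Type*} [Fintype ι] (v : ι → ℝ) :
    ∑ i, |v i| ≤ √(Fintype.card ι) * √(∑ i, v i ^ 2) := by
  rw [← Real.sqrt_mul (Nat.cast_nonneg _)]
  apply Real.le_sqrt_of_sq_le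
  simpa [sq_abs] using sq_sum_le_card_mul_sum_sq (s := univ) (f := fun i => |v i|)

theorem Matrix.sum_sum_abs_transpose_mul_self_apply_le {m n : Type*} [Fintype m] [Fintype n]
    [DecidableEq m] (S : Matrix m n ℝ) (hS : S * Sᵀ = 1) :
    ∑ i, ∑ j, |(Sᵀ * S) j i| ≤ Fintype.card n * √(Fintype.card m) := by
  set f : n → ℝ := fun i => ∑ j, (Sᵀ * S) j i ^ 2
  have hf : ∀ i, 0 ≤ f i := fun i => sum_nonneg fun j _ => sq_nonneg _
  calc ∑ i, ∑ j, |(Sᵀ * S) j i| ≤ ∑ i, √(Fintype.card n) * √(f i) :=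
        sum_le_sum fun i _ => Real.sum_abs_le_sqrt_card_mul_sqrt_sum_sq _
    _ = √(Fintype.card n) * ∑ i, |√(f i)| := by
        simp only [mul_sum, abs_of_nonneg (Real.sqrt_nonneg _)]
    _ ≤ √(Fintype.card n) * (√(Fintype.card n) * √(∑ i, √(f i) ^ 2)) :=
        mul_le_mul_of_nonneg_left (Real.sum_abs_le_sqrt_card_mul_sqrt_sum_sq _)
          (Real.sqrt_nonneg _)
    _ = Fintype.card n * √(Fintype.card m) := by
        simp only [Real.sq_sqrt (hf _), f, S.sum_sq_transpose_mul_self_apply hS, ← mul_assoc,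
          Real.mul_self_sqrt (Nat.cast_nonneg _)]

theorem exists_le_two_mul_of_sum_le_card_mul {ι : Type*} [Fintype ι] [Nonempty ι]
    {f g : ι → ℝ} {a b : ℝ} (hf : ∀ i, 0 ≤ f i) (hg : ∀ i, 0 ≤ g i) (ha : 0 < a) (hb : 0 < b)
    (hf_sum : ∑ i, f i ≤ Fintype.card ι * a) (hg_sum : ∑ i, g i ≤ Fintype.card ι * b) :
    ∃ i, f i ≤ 2 * a ∧ g i ≤ 2 * b := by
  have h_sum : ∑ i, (f i / (2 * a) + g i / (2 * b)) ≤ ∑ _i : ι, (1 : ℝ) :=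
    calc ∑ i, (f i / (2 * a) + g i / (2 * b))
        = (∑ i, f i) / (2 * a) + (∑ i, g i) / (2 * b) := by
          rw [sum_add_distrib, sum_div, sum_div]
      _ ≤ Fintype.card ι * a / (2 * a) + Fintype.card ι * b / (2 * b) := by gcongr
      _ = ∑ _i : ι, (1 : ℝ) := by
          simp only [sum_const, card_univ, nsmul_eq_mul, mul_one]
          field_simp
          norm_num
  obtain ⟨i, -, hi⟩ := exists_le_of_sum_le univ_nonempty h_sum
  have hfi := div_nonneg (hf i) (by positivity : (0 : ℝ) ≤ 2 * a)
  have hgi := div_nonneg (hg i) (by positivity : (0 : ℝ) ≤ 2 * b)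
  exact ⟨i, (div_le_one (by positivity)).1 (by linarith),
    (div_le_one (by positivity)).1 (by linarith)⟩

/-- For any matrix `S` with orthonormal rows, there is an index `i` such that the column
`SᵀS·e_i` has small ℓ₂ and ℓ₁ norms: `‖SᵀS·e_i‖₂² ≤ 2r/n` and `‖SᵀS·e_i‖₁ ≤ 2√r`. -/
theorem exists_small_column (r n : ℕ) (hr : 0 < r) (hn : 0 < n)
    (S : Matrix (Fin r) (Fin n) ℝ) (hS : S * S.transpose = 1) :
    ∃ i : Fin n,
      (∑ j, ((S.transpose * S) j i)^2 ≤ 2 * (r : ℝ) / n) ∧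
      (∑ j, |(S.transpose * S) j i| ≤ 2 * Real.sqrt r) := by
  have : Nonempty (Fin n) := ⟨⟨0, hn⟩⟩
  have hr' : (0 : ℝ) < r := Nat.cast_pos.2 hr
  have hn' : (0 : ℝ) < n := Nat.cast_pos.2 hn
  rw [mul_div_assoc]
  exact exists_le_two_mul_of_sum_le_card_mul (fun i => sum_nonneg fun j _ => sq_nonneg _)
    (fun i => sum_nonneg fun j _ => abs_nonneg _) (div_pos hr' hn') (Real.sqrt_pos.2 hr')
    (by simp [S.sum_sq_transpose_mul_self_apply hS, mul_div_cancel₀ _ hn'.ne'])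
    (by simpa using S.sum_sum_abs_transpose_mul_self_apply_le hS)
end

section
/- Let S be a real r × n matrix with orthonormal rows (S·Sᵀ = I_r). Then at least 9n/10 of the indices i ∈ {1,…,n} satisfy both ‖SᵀS·e_i‖₂² ≤ 20r/n and ‖SᵀS·e_i‖₁ ≤ 20√r, where e_i is the i-th standard basis vector of ℝ^n. -/
open Finset

/-!
`P = SᵀS` is the orthogonal projection onto the row space of `S`, so `‖P eᵢ‖₂² = Pᵢᵢ` and
`∑ᵢ Pᵢᵢ = tr P = r`. By Markov's inequality all but `n/20` of the diagonal entries are at most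
`20r/n`, and for such `i` Cauchy–Schwarz gives `‖P eᵢ‖₁ ≤ √n ‖P eᵢ‖₂ ≤ √(20r) ≤ 20√r`.
-/

theorem Finset.card_sub_sum_div_le_card_filter_le {ι K : Type*} [Field K] [LinearOrder K]
    [IsStrictOrderedRing K] (s : Finset ι) {f : ι → K} (hf : ∀ i ∈ s, 0 ≤ f i) {t : K}
    (ht : 0 < t) : (#s : K) - (∑ i ∈ s, f i) / t ≤ #{i ∈ s | f i ≤ t} := by
  have hbad : (#{i ∈ s | ¬f i ≤ t} : K) * t ≤ ∑ i ∈ s, f i :=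
    calc (#{i ∈ s | ¬f i ≤ t} : K) * t
        ≤ ∑ i ∈ s with ¬f i ≤ t, f i := by
          simpa using card_nsmul_le_sum _ f t fun i hi ↦ (not_le.mp (mem_filter.mp hi).2).le
      _ ≤ ∑ i ∈ s, f i := sum_le_sum_of_subset_of_nonneg (filter_subset _ s) fun i hi _ ↦ hf i hi
  have hsplit : (#{i ∈ s | f i ≤ t} : K) + #{i ∈ s | ¬f i ≤ t} = #s := by
    exact_mod_cast card_filter_add_card_filter_not (s := s) (fun i ↦ f i ≤ t)
  rw [← le_div_iff₀ ht] at hbad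
  linarith

theorem Real.sum_abs_le_sqrt_card_mul_sum_sq {ι : Type*} (s : Finset ι) (x : ι → ℝ) :
    ∑ i ∈ s, |x i| ≤ √(#s * ∑ i ∈ s, x i ^ 2) :=
  (Real.le_sqrt (sum_nonneg fun _ _ ↦ abs_nonneg _) (by positivity)).mpr <| by
    simpa only [sq_abs] using sq_sum_le_card_mul_sum_sq (s := s) (f := fun i ↦ |x i|)

theorem Real.sum_abs_le_sqrt_of_sum_sq_le_div {ι : Type*} (s : Finset ι) {x : ι → ℝ} {b : ℝ}
    (h : ∑ i ∈ s, x i ^ 2 ≤ b / #s) : ∑ i ∈ s, |x i| ≤ √b := by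
  rcases s.eq_empty_or_nonempty with rfl | hs
  · simp
  calc ∑ i ∈ s, |x i| ≤ √(#s * ∑ i ∈ s, x i ^ 2) := sum_abs_le_sqrt_card_mul_sum_sq s x
    _ ≤ √(#s * (b / #s)) := by gcongr
    _ = √b := by rw [mul_div_cancel₀ _ (by simpa using hs.ne_empty)]

namespace Matrix

theorem sum_sq_apply_eq_diag_of_isSymm {ι R : Type*} [Fintype ι] [CommSemiring R]
    {P : Matrix ι ι R} (hsymm : P.IsSymm) (hidem : IsIdempotentElem P) (i : ι) :
    ∑ j, P j i ^ 2 = P i i := by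
  conv_rhs => rw [← hidem.eq, mul_apply]
  exact sum_congr rfl fun j _ ↦ by rw [sq, hsymm.apply]

variable {m n R : Type*} [Fintype m] [CommSemiring R]

theorem isSymm_transpose_mul (S : Matrix m n R) : (Sᵀ * S).IsSymm := by
  simp [IsSymm, transpose_mul]

variable [Fintype n] [DecidableEq m] {S : Matrix m n R}

theorem isIdempotentElem_transpose_mul (hS : S * Sᵀ = 1) : IsIdempotentElem (Sᵀ * S) := by
  rw [IsIdempotentElem, Matrix.mul_assoc, ← Matrix.mul_assoc S, hS, Matrix.one_mul]

theorem trace_transpose_mul_of_mul_transpose_eq_one (hS : S * Sᵀ = 1) :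
    (Sᵀ * S).trace = Fintype.card m := by
  rw [trace_mul_comm, hS, trace_one]

end Matrix

/-- For any matrix `S` with orthonormal rows, at least `9n/10` of the indices `i`
satisfy both `‖SᵀS·e_i‖₂² ≤ 20r/n` and `‖SᵀS·e_i‖₁ ≤ 20√r`. -/
theorem many_small_columns (r n : ℕ) (hr : 0 < r) (hn : 0 < n)
    (S : Matrix (Fin r) (Fin n) ℝ) (hS : S * S.transpose = 1) :
    9 * (n : ℝ) / 10 ≤
      ({i : Fin n |
        (∑ j, ((S.transpose * S) j i)^2 ≤ 20 * (r : ℝ) / n) ∧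
        (∑ j, |(S.transpose * S) j i| ≤ 20 * Real.sqrt r)}).ncard := by
  set P := S.transpose * S
  have hcol : ∀ i, ∑ j, P j i ^ 2 = P i i := Matrix.sum_sq_apply_eq_diag_of_isSymm
    (Matrix.isSymm_transpose_mul S) (Matrix.isIdempotentElem_transpose_mul hS)
  have htrace : ∑ i, P i i = r := by
    simpa [Matrix.trace] using Matrix.trace_transpose_mul_of_mul_transpose_eq_one hS
  have hn' : (0 : ℝ) < n := by exact_mod_cast hn
  have ht : (0 : ℝ) < 20 * r / n := by positivity
  have hgood : ∀ i, P i i ≤ 20 * r / n → ∑ j, |P j i| ≤ 20 * √r := fun i hi ↦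
    calc ∑ j, |P j i| ≤ √(20 * r) := Real.sum_abs_le_sqrt_of_sum_sq_le_div univ (by simpa [hcol])
      _ ≤ 20 * √r := by
          rw [Real.sqrt_mul (by norm_num)]
          gcongr
          exact (Real.sqrt_le_left (by norm_num)).mpr (by norm_num)
  have hmarkov := card_sub_sum_div_le_card_filter_le univ (f := fun i ↦ P i i)
    (fun i _ ↦ hcol i ▸ by positivity) ht
  have hratio : (r : ℝ) / (20 * r / n) = n / 20 := by field_simp
  rw [htrace, hratio, card_univ, Fintype.card_fin] at hmarkov
  calc 9 * (n : ℝ) / 10 ≤ #{i | P i i ≤ 20 * r / n} := by linarith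
    _ ≤ _ := by
        rw [← Set.ncard_coe_finset, Nat.cast_le]
        refine Set.ncard_le_ncard (fun i hi ↦ ?_) (Set.toFinite _)
        replace hi : P i i ≤ 20 * r / n := by simpa using hi
        exact ⟨hcol i ▸ hi, hgood i hi⟩
end

section
/- Let S be a real r × n matrix with orthonormal rows (S·Sᵀ = I_r) and suppose r ≤ n/4. Then there exist an index i ∈ {1,…,n} and a vector v ∈ ℝ^n such that S·v = 0, v_i ≥ 1/2, and ‖v‖₁ ≤ 2√r + 1. -/
/-!
With `P = SᵀS` the orthogonal projection onto the row space of `S`, every vector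
`eᵢ - P eᵢ` lies in the kernel of `S`; its `i`-th coordinate is `1 - Pᵢᵢ` and its ℓ¹ norm is at
most `1 + ‖P eᵢ‖₁`. Since `P` is a symmetric idempotent of trace `r`, the diagonal of `P` sums
to `r` and (Cauchy–Schwarz over all `n²` entries, whose squares also sum to `r`) the column
ℓ¹ norms of `P` sum to at most `n √r`. As `4r ≤ n`, averaging `4√r Pᵢᵢ + ‖P eᵢ‖₁` over `i`
finds an index where it is at most `2√r`, so that `Pᵢᵢ ≤ 1/2` and `‖P eᵢ‖₁ ≤ 2√r`.
-/

open Finset Matrix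

variable {R m n : Type*}

theorem mul_transpose_mul_self_of_mul_transpose_eq_one [Fintype m] [Fintype n] [Semiring R]
    [DecidableEq m] {S : Matrix m n R} (hS : S * Sᵀ = 1) : S * (Sᵀ * S) = S := by
  rw [← Matrix.mul_assoc, hS, Matrix.one_mul]

theorem mulVec_sub_transpose_mul_self_mulVec_eq_zero [Fintype m] [Fintype n] [Ring R]
    [DecidableEq m] {S : Matrix m n R} (hS : S * Sᵀ = 1) (x : n → R) :
    S *ᵥ (x - (Sᵀ * S) *ᵥ x) = 0 := by
  rw [mulVec_sub, mulVec_mulVec, mul_transpose_mul_self_of_mul_transpose_eq_one hS, sub_self]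

theorem trace_transpose_mul_self_of_mul_transpose_eq_one [Fintype m] [Fintype n]
    [CommSemiring R] [DecidableEq m] {S : Matrix m n R} (hS : S * Sᵀ = 1) :
    (Sᵀ * S).trace = Fintype.card m := by
  rw [trace_mul_comm, hS, trace_one]

theorem transpose_mul_self_transpose_mul_self_of_mul_transpose_eq_one [Fintype m] [Fintype n]
    [CommSemiring R] [DecidableEq m] {S : Matrix m n R} (hS : S * Sᵀ = 1) :
    (Sᵀ * S)ᵀ * (Sᵀ * S) = Sᵀ * S := by
  rw [transpose_mul, transpose_transpose, Matrix.mul_assoc,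
    mul_transpose_mul_self_of_mul_transpose_eq_one hS]

theorem sum_sum_sq_eq_trace_transpose_mul_self [Fintype m] [Fintype n] [CommSemiring R]
    (A : Matrix m n R) : ∑ i, ∑ j, A i j ^ 2 = (Aᵀ * A).trace := by
  simp only [trace, Matrix.diag, mul_apply, transpose_apply, sq]
  exact sum_comm

theorem diag_transpose_mul_self_nonneg [Fintype m] (S : Matrix m n ℝ) (j : n) :
    0 ≤ (Sᵀ * S) j j := by
  simp only [mul_apply, transpose_apply]
  exact sum_nonneg fun i _ => mul_self_nonneg _

theorem sum_sum_abs_le_sqrt_card_mul_sqrt_sum_sum_sq [Fintype m] [Fintype n]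
    (A : Matrix m n ℝ) :
    ∑ i, ∑ j, |A i j| ≤ √(Fintype.card m * Fintype.card n) * √(∑ i, ∑ j, A i j ^ 2) := by
  rw [← Real.sqrt_mul (by positivity), Real.le_sqrt (by positivity) (by positivity)]
  have := sq_sum_le_card_mul_sum_sq (s := (univ : Finset (m × n))) (f := fun p => |A p.1 p.2|)
  rw [card_univ, Fintype.card_prod, Nat.cast_mul, Fintype.sum_prod_type' (fun i j => |A i j|),
    Fintype.sum_prod_type' (fun i j => |A i j| ^ 2)] at this
  simpa only [sq_abs] using this

theorem sum_sum_abs_transpose_mul_self_le [Fintype m] [Fintype n] [DecidableEq m]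
    {S : Matrix m n ℝ} (hS : S * Sᵀ = 1) :
    ∑ i, ∑ j, |(Sᵀ * S) i j| ≤ Fintype.card n * √(Fintype.card m) := by
  calc ∑ i, ∑ j, |(Sᵀ * S) i j|
      ≤ √(Fintype.card n * Fintype.card n) * √(∑ i, ∑ j, (Sᵀ * S) i j ^ 2) :=
        sum_sum_abs_le_sqrt_card_mul_sqrt_sum_sum_sq _
    _ = Fintype.card n * √(Fintype.card m) := by
        rw [sum_sum_sq_eq_trace_transpose_mul_self,
          transpose_mul_self_transpose_mul_self_of_mul_transpose_eq_one hS,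
          trace_transpose_mul_self_of_mul_transpose_eq_one hS, Real.sqrt_mul_self (by positivity)]

theorem sum_abs_single_sub_mulVec_single_le [Fintype n] [DecidableEq n] (P : Matrix n n ℝ)
    (i : n) : ∑ j, |(Pi.single i 1 - P *ᵥ Pi.single i 1 : n → ℝ) j| ≤ 1 + ∑ j, |P j i| := by
  calc ∑ j, |(Pi.single i 1 - P *ᵥ Pi.single i 1 : n → ℝ) j|
      ≤ ∑ j, (|(Pi.single i 1 : n → ℝ) j| + |P j i|) := by
        refine sum_le_sum fun j _ => ?_
        simpa using abs_sub _ _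
    _ = 1 + ∑ j, |P j i| := by
        rw [sum_add_distrib]
        simp [Pi.single_apply, apply_ite]

/-- For any matrix `S` with orthonormal rows and `r ≤ n/4`, there exist an index `i` and
a vector `v` in the kernel of `S` with `v_i ≥ 1/2` and `‖v‖₁ ≤ 2√r + 1`. -/
theorem exists_kernel_vector_with_large_coordinate (r n : ℕ) (hr : 0 < r) (hn : 0 < n)
    (hrn : (r : ℝ) ≤ (n : ℝ) / 4)
    (S : Matrix (Fin r) (Fin n) ℝ) (hS : S * S.transpose = 1) :
    ∃ (i : Fin n) (v : Fin n → ℝ),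
      S.mulVec v = 0 ∧ (1:ℝ)/2 ≤ v i ∧ ∑ j, |v j| ≤ 2 * Real.sqrt r + 1 := by
  set P := Sᵀ * S
  have hsqrt : 0 < √(r : ℝ) := by positivity
  have hdiag : ∑ i, P i i = r := by
    simpa only [trace, Matrix.diag, Fintype.card_fin] using trace_transpose_mul_self_of_mul_transpose_eq_one hS
  have hcols : ∑ i, ∑ j, |P j i| ≤ n * √r := by
    rw [sum_comm]
    simpa only [Fintype.card_fin] using sum_sum_abs_transpose_mul_self_le hS
  obtain ⟨i, -, hi⟩ : ∃ i ∈ univ, 4 * √r * P i i + ∑ j, |P j i| ≤ 2 * √r := by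
    refine exists_le_of_sum_le (univ_nonempty_iff.2 ⟨⟨0, hn⟩⟩) ?_
    rw [sum_add_distrib, ← mul_sum, hdiag, sum_const, card_univ, Fintype.card_fin, nsmul_eq_mul]
    linarith [mul_le_mul_of_nonneg_left hrn hsqrt.le]
  have hPii : 0 ≤ P i i := diag_transpose_mul_self_nonneg S i
  have hcol : 0 ≤ ∑ j, |P j i| := by positivity
  refine ⟨i, Pi.single i 1 - P *ᵥ Pi.single i 1,
    mulVec_sub_transpose_mul_self_mulVec_eq_zero hS _, ?_, ?_⟩
  · have hvi : (Pi.single i 1 - P *ᵥ Pi.single i 1 : Fin n → ℝ) i = 1 - P i i := by simp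
    rw [hvi]
    nlinarith
  · linarith [sum_abs_single_sub_mulVec_single_le P i, mul_nonneg hsqrt.le hPii]
end

section
/- Let ε ∈ (0,1], let n, B, R be positive integers, and let x ∈ ℝ^n be a nonzero vector with nonnegative coordinates. Let S = {i : x_i ≥ ε·‖x‖₁} be the set of ε-heavy hitters (so |S| ≤ ⌈1/ε⌉). Let h_1,…,h_R : {1,…,n} → {1,…,B} be arbitrary functions; define counters C_{r,j} = Σ_{i : h_r(i)=j} x_i for r ∈ [R], j ∈ [B], and estimates x̂_i = min_{1≤r≤R} C_{r,h_r(i)}. Suppose that for every set T ⊆ {1,…,n} \ S with |T| = ⌈30/ε⌉ there exists r ∈ [R] such that the image h_r(T) has at least ⌈10/ε⌉ elements. Then for every set L ⊆ {1,…,n} with |L| ≥ ⌈30/ε⌉ + ⌈1/ε⌉ such that x̂_i ≥ x̂_j for all i ∈ L and j ∉ L, it holds that S ⊆ L. -/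
/-!
Suppose a heavy hitter `i` is missing from `L`. At most `⌈1/ε⌉` coordinates are heavy, so `L`
contains a set `T` of `⌈30/ε⌉` non-heavy coordinates, and some row `r` spreads `T` over at
least `⌈10/ε⌉` distinct buckets. Every `j ∈ T` has estimate at least that of `i`, which is at
least `x_i ≥ ε‖x‖₁`, and a Count-Min estimate never exceeds a counter of its own row; so each
of these buckets holds mass at least `ε‖x‖₁`. The buckets of a row are disjoint, hence
`⌈10/ε⌉ · ε‖x‖₁ ≤ ‖x‖₁`, which is absurd for `x ≠ 0`.
-/

open Finset

lemma card_heavy_le_natCeil_inv {ι : Type*} [Fintype ι] {x : ι → ℝ} (hx : ∀ i, 0 ≤ x i)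
    {ε : ℝ} (hε : 0 < ε) (hsum : 0 < ∑ j, x j) :
    #{i | ε * ∑ j, x j ≤ x i} ≤ ⌈1 / ε⌉₊ := by
  set S : Finset ι := {i | ε * ∑ j, x j ≤ x i}
  have hmass : #S * (ε * ∑ j, x j) ≤ ∑ j, x j :=
    calc #S * (ε * ∑ j, x j) = #S • (ε * ∑ j, x j) := (nsmul_eq_mul _ _).symm
      _ ≤ ∑ i ∈ S, x i := card_nsmul_le_sum _ _ _ fun i hi => (mem_filter.mp hi).2
      _ ≤ ∑ j, x j := sum_le_univ_sum_of_nonneg hx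
  have hcard : (#S : ℝ) ≤ 1 / ε := by
    rw [le_div_iff₀ hε]
    nlinarith
  exact_mod_cast hcard.trans (Nat.le_ceil _)

namespace CountMin

variable {ι ρ β : Type*} [Fintype ι] [DecidableEq β]

/-- `bucketSum x (h r) b` is the counter `C_{r,b}` and `estimate x h i` the estimate `x̂_i`. -/
def bucketSum (x : ι → ℝ) (g : ι → β) (b : β) : ℝ :=
  ∑ j ∈ univ.filter (fun j => g j = b), x j

noncomputable def estimate (x : ι → ℝ) (h : ρ → ι → β) (k : ι) : ℝ :=
  ⨅ r, bucketSum x (h r) (h r k)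

lemma le_bucketSum {x : ι → ℝ} (hx : ∀ i, 0 ≤ x i) (g : ι → β) (k : ι) :
    x k ≤ bucketSum x g (g k) :=
  single_le_sum (fun j _ => hx j) (by simp)

lemma sum_bucketSum_le [Fintype β] {x : ι → ℝ} (hx : ∀ i, 0 ≤ x i) (g : ι → β) (t : Finset β) :
    ∑ b ∈ t, bucketSum x g b ≤ ∑ j, x j :=
  calc ∑ b ∈ t, bucketSum x g b
      ≤ ∑ b, bucketSum x g b :=
        sum_le_univ_sum_of_nonneg fun _ => sum_nonneg fun j _ => hx j
    _ = ∑ j, x j := sum_fiberwise univ g x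

lemma card_image_mul_le_sum [Fintype β] {x : ι → ℝ} (hx : ∀ i, 0 ≤ x i) (g : ι → β)
    (T : Finset ι) {θ : ℝ} (hθ : ∀ j ∈ T, θ ≤ bucketSum x g (g j)) :
    #(T.image g) * θ ≤ ∑ j, x j := by
  have hbucket : ∀ b ∈ T.image g, θ ≤ bucketSum x g b := forall_mem_image.2 hθ
  calc #(T.image g) * θ = #(T.image g) • θ := (nsmul_eq_mul _ _).symm
    _ ≤ ∑ b ∈ T.image g, bucketSum x g b := card_nsmul_le_sum _ _ _ hbucket
    _ ≤ ∑ j, x j := sum_bucketSum_le hx g _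

lemma le_estimate [Nonempty ρ] {x : ι → ℝ} (hx : ∀ i, 0 ≤ x i) (h : ρ → ι → β) (k : ι) :
    x k ≤ estimate x h k :=
  le_ciInf fun r => le_bucketSum hx (h r) k

lemma estimate_le_bucketSum [Finite ρ] (x : ι → ℝ) (h : ρ → ι → β) (k : ι) (r : ρ) :
    estimate x h k ≤ bucketSum x (h r) (h r k) :=
  ciInf_le (Set.finite_range _).bddBelow r

end CountMin

open CountMin

theorem count_min_guarantee3_core_general (ε : ℝ) (hε0 : 0 < ε)
    (n B R : ℕ)
    (x : Fin n → ℝ) (hx : x ≠ 0) (hxpos : ∀ i, 0 ≤ x i)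
    (h : Fin R → Fin n → Fin B)
    (hdisperse : ∀ T : Finset (Fin n),
      (∀ i ∈ T, x i < ε * ∑ j, |x j|) → T.card = ⌈30/ε⌉₊ →
      ∃ r : Fin R, ⌈10/ε⌉₊ ≤ (T.image (h r)).card) :
    ∀ L : Finset (Fin n), ⌈30/ε⌉₊ + ⌈1/ε⌉₊ ≤ L.card →
      (∀ i ∈ L, ∀ j ∉ L,
        (⨅ r : Fin R, ∑ j' ∈ Finset.univ.filter (fun j' => h r j' = h r j), x j') ≤
        (⨅ r : Fin R, ∑ i' ∈ Finset.univ.filter (fun i' => h r i' = h r i), x i')) →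
      ∀ i : Fin n, ε * (∑ j, |x j|) ≤ x i → i ∈ L := by
  intro L hL htop i hi
  by_contra hiL
  have hnorm : ∑ j, |x j| = ∑ j, x j := sum_congr rfl fun j _ => abs_of_nonneg (hxpos j)
  rw [hnorm] at hi
  simp only [hnorm] at hdisperse
  set N := ∑ j, x j
  have hN : 0 < N := Fintype.sum_pos (lt_of_le_of_ne hxpos (Ne.symm hx))
  set S : Finset (Fin n) := {k | ε * N ≤ x k}
  have hLS : ⌈30 / ε⌉₊ ≤ #(L \ S) := by
    have := card_le_card_sdiff_add_card (s := L) (t := S)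
    have : #S ≤ ⌈1 / ε⌉₊ := card_heavy_le_natCeil_inv hxpos hε0 hN
    omega
  obtain ⟨T, hTLS, hTcard⟩ := exists_subset_card_eq hLS
  obtain ⟨r, hr⟩ := hdisperse T (fun j hj => by simpa [S] using (mem_sdiff.mp (hTLS hj)).2) hTcard
  have : Nonempty (Fin R) := ⟨r⟩
  have hbucket : ∀ j ∈ T, ε * N ≤ bucketSum x (h r) (h r j) := fun j hj =>
    calc ε * N ≤ x i := hi
      _ ≤ estimate x h i := le_estimate hxpos h i
      _ ≤ estimate x h j := htop j (mem_sdiff.mp (hTLS hj)).1 i hiL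
      _ ≤ bucketSum x (h r) (h r j) := estimate_le_bucketSum x h j r
  have hmass := card_image_mul_le_sum hxpos (h r) T hbucket
  have hten : (10 / ε) * (ε * N) ≤ #(T.image (h r)) * (ε * N) :=
    mul_le_mul_of_nonneg_right ((Nat.le_ceil _).trans (by exact_mod_cast hr)) (by positivity)
  have hcancel : 10 / ε * (ε * N) = 10 * N := by field_simp
  linarith

/-- Deterministic core of the improved Count-Min analysis under Guarantee 3: if the hash
functions disperse every candidate set of `⌈30/ε⌉` non-heavy coordinates into at least
`⌈10/ε⌉` buckets in some row, then any set of `⌈30/ε⌉ + ⌈1/ε⌉` coordinates with the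
largest Count-Min estimates contains all `ε`-heavy hitters of the nonnegative input. -/
theorem count_min_guarantee3_core (ε : ℝ) (hε0 : 0 < ε) (hε1 : ε ≤ 1)
    (n B R : ℕ) (hn : 0 < n) (hB : 0 < B) (hR : 0 < R)
    (x : Fin n → ℝ) (hx : x ≠ 0) (hxpos : ∀ i, 0 ≤ x i)
    (h : Fin R → Fin n → Fin B)
    (hdisperse : ∀ T : Finset (Fin n),
      (∀ i ∈ T, x i < ε * ∑ j, |x j|) → T.card = ⌈30/ε⌉₊ →
      ∃ r : Fin R, ⌈10/ε⌉₊ ≤ (T.image (h r)).card) :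
    ∀ L : Finset (Fin n), ⌈30/ε⌉₊ + ⌈1/ε⌉₊ ≤ L.card →
      (∀ i ∈ L, ∀ j ∉ L,
        (⨅ r : Fin R, ∑ j' ∈ Finset.univ.filter (fun j' => h r j' = h r j), x j') ≤
        (⨅ r : Fin R, ∑ i' ∈ Finset.univ.filter (fun i' => h r i' = h r i), x i')) →
      ∀ i : Fin n, ε * (∑ j, |x j|) ≤ x i → i ∈ L :=
  count_min_guarantee3_core_general ε hε0 n B R x hx hxpos h hdisperse
end

section
/- Let ζ ∈ (0,1), ε ∈ (0,1), and c > 0 with (1−ζ)·c ≥ 2 + ε. Let Γ : {1,…,N} × {1,…,D} → {1,…,M} satisfy the expansion property: for every A ⊆ {1,…,N} with |A| ≤ ⌈c/ε⌉, the neighborhood Γ(A) = {Γ(i,d) : i ∈ A, d ∈ [D]} has size at least (1−ζ)·|A|·D. Let x ∈ ℝ^N be nonzero with nonnegative coordinates; define counters C_j = Σ_{(i,d) : Γ(i,d)=j} x_i for j ∈ [M] and estimates x̂_i = min_{1≤d≤D} C_{Γ(i,d)}. Then every set L ⊆ {1,…,N} with |L| ≥ ⌈c/ε⌉ + ⌈1/ε⌉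 such that x̂_i ≥ x̂_j for all i ∈ L and j ∉ L contains every index i with x_i ≥ ε·‖x‖₁. -/
open Finset

/-!
Suppose a heavy coordinate `i` were missing from `L`. Every estimate dominates its true value,
so `i` and all of `L` have estimates at least `ε‖x‖₁`; pick `⌈c/ε⌉` of them. Each of the
`≥ (1-ζ)⌈c/ε⌉D ≥ (2+ε)D/ε` counters they hash to then holds at least `ε‖x‖₁`, while all
counters together hold only `D‖x‖₁`.
-/

namespace ExpanderSketch

variable {ι δ κ : Type*} [Fintype ι] [Fintype δ] [DecidableEq κ]

def counter (Γ : ι × δ → κ) (x : ι → ℝ) (m : κ) : ℝ :=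
  ∑ p ∈ univ.filter (fun p : ι × δ => Γ p = m), x p.1

noncomputable def estimate (Γ : ι × δ → κ) (x : ι → ℝ) (i : ι) : ℝ :=
  ⨅ d : δ, counter Γ x (Γ (i, d))

theorem sum_counter [Fintype κ] (Γ : ι × δ → κ) (x : ι → ℝ) :
    ∑ m, counter Γ x m = Fintype.card δ * ∑ i, x i := by
  simp only [counter]
  rw [sum_fiberwise univ Γ (fun p => x p.1), Fintype.sum_prod_type, mul_sum]
  simp

theorem counter_nonneg {x : ι → ℝ} (hx : 0 ≤ x) (Γ : ι × δ → κ) (m : κ) :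
    0 ≤ counter Γ x m :=
  sum_nonneg fun p _ => hx p.1

theorem estimate_le_counter (Γ : ι × δ → κ) (x : ι → ℝ) (i : ι) (d : δ) :
    estimate Γ x i ≤ counter Γ x (Γ (i, d)) :=
  ciInf_le (Finite.bddBelow_range _) d

theorem le_estimate [Nonempty δ] {x : ι → ℝ} (hx : 0 ≤ x) (Γ : ι × δ → κ) (i : ι) :
    x i ≤ estimate Γ x i :=
  le_ciInf fun d => single_le_sum (f := fun p : ι × δ => x p.1)
    (s := univ.filter fun p => Γ p = Γ (i, d)) (fun p _ => hx p.1)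
    (mem_filter.mpr ⟨mem_univ (i, d), rfl⟩)

theorem card_image_mul_le_of_le_estimate [Fintype κ] {x : ι → ℝ} (hx : 0 ≤ x)
    (Γ : ι × δ → κ) {A : Finset ι} {t : ℝ} (hA : ∀ i ∈ A, t ≤ estimate Γ x i) :
    #((A ×ˢ univ).image Γ) * t ≤ Fintype.card δ * ∑ i, x i := by
  have hcounter : ∀ m ∈ (A ×ˢ univ).image Γ, t ≤ counter Γ x m := by
    simp only [mem_image, mem_product, mem_univ, and_true]
    rintro _ ⟨⟨i, d⟩, hi, rfl⟩
    exact (hA i hi).trans (estimate_le_counter Γ x i d)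
  calc #((A ×ˢ univ).image Γ) * t
      ≤ ∑ m ∈ (A ×ˢ univ).image Γ, counter Γ x m := by
        simpa using card_nsmul_le_sum _ _ t hcounter
    _ ≤ ∑ m, counter Γ x m :=
        sum_le_sum_of_subset_of_nonneg (subset_univ _) fun m _ _ => counter_nonneg hx Γ m
    _ = Fintype.card δ * ∑ i, x i := sum_counter Γ x

end ExpanderSketch

open ExpanderSketch in
theorem expander_heavy_hitters_general (ζ ε c : ℝ) (hζ1 : ζ < 1)
    (hε0 : 0 < ε) (hcζ : 2 + ε ≤ (1 - ζ) * c)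
    (N D M : ℕ) (hD : 0 < D)
    (Γ : Fin N × Fin D → Fin M)
    (hexp : ∀ A : Finset (Fin N), A.card ≤ ⌈c/ε⌉₊ →
      (1 - ζ) * A.card * D ≤ (((A ×ˢ (Finset.univ : Finset (Fin D))).image Γ).card : ℝ))
    (x : Fin N → ℝ) (hx : x ≠ 0) (hxpos : ∀ i, 0 ≤ x i) :
    ∀ L : Finset (Fin N), ⌈c/ε⌉₊ + ⌈1/ε⌉₊ ≤ L.card →
      (∀ i ∈ L, ∀ j ∉ L,
        (⨅ d : Fin D, ∑ p ∈ Finset.univ.filter (fun p : Fin N × Fin D => Γ p = Γ (j, d)), x p.1) ≤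
        (⨅ d : Fin D, ∑ p ∈ Finset.univ.filter (fun p : Fin N × Fin D => Γ p = Γ (i, d)), x p.1)) →
      ∀ i : Fin N, ε * (∑ j, |x j|) ≤ x i → i ∈ L := by
  intro L hL hdom i hheavy
  by_contra hiL
  have : Nonempty (Fin D) := ⟨⟨0, hD⟩⟩
  have hnorm : ∑ j, |x j| = ∑ j, x j := sum_congr rfl fun j _ => abs_of_nonneg (hxpos j)
  have hnorm_pos : 0 < ∑ j, x j := by
    obtain ⟨j, hj⟩ := Function.ne_iff.mp hx
    exact hnorm ▸ (abs_pos.mpr hj).trans_le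
      (single_le_sum (fun k _ => abs_nonneg (x k)) (mem_univ j))
  have hlarge : ∀ j ∈ insert i L, ε * ∑ j, x j ≤ estimate Γ x j := by
    rw [← hnorm]
    simp only [mem_insert, forall_eq_or_imp]
    exact ⟨hheavy.trans (le_estimate hxpos Γ i),
      fun l hl => (hheavy.trans (le_estimate hxpos Γ i)).trans (hdom l hl i hiL)⟩
  obtain ⟨A, hAsub, hAcard⟩ := exists_subset_card_eq (s := insert i L) (n := ⌈c/ε⌉₊)
    (by grind [card_insert_of_notMem])
  set J := (A ×ˢ (univ : Finset (Fin D))).image Γ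
  have hcount : ε * #J ≤ D := by
    have := card_image_mul_le_of_le_estimate hxpos Γ fun j hj => hlarge j (hAsub hj)
    rw [Fintype.card_fin] at this
    exact le_of_mul_le_mul_right (by linarith) hnorm_pos
  have hceil : c ≤ ε * ⌈c/ε⌉₊ := (div_le_iff₀' hε0).mp (Nat.le_ceil _)
  have : (2 + ε) * D ≤ D := calc
    (2 + ε) * D ≤ (1 - ζ) * c * D := by gcongr
    _ ≤ (1 - ζ) * (ε * ⌈c/ε⌉₊) * D := by gcongr
    _ = ε * ((1 - ζ) * #A * D) := by rw [hAcard]; ring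
    _ ≤ ε * #J := by gcongr; exact hexp A hAcard.le
    _ ≤ D := hcount
  have : (0 : ℝ) < D := by exact_mod_cast hD
  linarith [mul_pos hε0 this]

/-- Correctness of the expander-based heavy hitters scheme in the strict turnstile model:
if `Γ` expands every set of at most `⌈c/ε⌉` left vertices by a `(1−ζ)D` factor and
`(1−ζ)c ≥ 2 + ε`, then any set of `⌈c/ε⌉ + ⌈1/ε⌉` coordinates with the largest
Count-Min-style estimates contains every `ε`-heavy hitter of the nonnegative input. -/
theorem expander_heavy_hitters (ζ ε c : ℝ) (hζ0 : 0 < ζ) (hζ1 : ζ < 1)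
    (hε0 : 0 < ε) (hε1 : ε < 1) (hc : 0 < c) (hcζ : 2 + ε ≤ (1 - ζ) * c)
    (N D M : ℕ) (hN : 0 < N) (hD : 0 < D) (hM : 0 < M)
    (Γ : Fin N × Fin D → Fin M)
    (hexp : ∀ A : Finset (Fin N), A.card ≤ ⌈c/ε⌉₊ →
      (1 - ζ) * A.card * D ≤ (((A ×ˢ (Finset.univ : Finset (Fin D))).image Γ).card : ℝ))
    (x : Fin N → ℝ) (hx : x ≠ 0) (hxpos : ∀ i, 0 ≤ x i) :
    ∀ L : Finset (Fin N), ⌈c/ε⌉₊ + ⌈1/ε⌉₊ ≤ L.card →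
      (∀ i ∈ L, ∀ j ∉ L,
        (⨅ d : Fin D, ∑ p ∈ Finset.univ.filter (fun p : Fin N × Fin D => Γ p = Γ (j, d)), x p.1) ≤
        (⨅ d : Fin D, ∑ p ∈ Finset.univ.filter (fun p : Fin N × Fin D => Γ p = Γ (i, d)), x p.1)) →
      ∀ i : Fin N, ε * (∑ j, |x j|) ≤ x i → i ∈ L :=
  expander_heavy_hitters_general ζ ε c hζ1 hε0 hcζ N D M hD Γ hexp x hx hxpos
end

section
/- Let ε ∈ (0,1), c > 0, and let s, m, n be positive integers. Let M ∈ {0,1}^{m×n} be a (⌈1/ε⌉, ⌈c/ε⌉, ⌊s/ε⌋)-list-disjunct matrix in which every column contains at least one and at most s ones. Let x ∈ ℝ^n be nonzero with nonnegative coordinates, let y = Mx, and define estimates x̂_i = min{ y_q : M_{q,i} = 1 }. Then every set L ⊆ {1,…,n} with |L| ≥ ⌈c/ε⌉ + ⌈1/ε⌉ such that x̂_i ≥ x̂_j for all i ∈ L and j ∉ L contains every index i with x_i ≥ ε·‖x‖₁. -/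
/-!
At most `⌊s/ε⌋` rows can carry a measurement `y_q ≥ ε‖x‖₁`, because each column has at most
`s` ones and hence `∑_q y_q ≤ s‖x‖₁`. If a heavy hitter `i` were outside `L`, take `⌈c/ε⌉`
columns `T ⊆ L`: list-disjunctness with those rows as the error set yields `j ∈ T` lying in a
row `q` with `y_q < ε‖x‖₁`, so `x̂_j < ε‖x‖₁ ≤ x_i ≤ x̂_i`, contradicting `x̂_i ≤ x̂_j`.
-/

open Finset

lemma Finset.card_filter_mul_le_sum {ι : Type*} (s : Finset ι) {f : ι → ℝ}
    (hf : ∀ i ∈ s, 0 ≤ f i) (a : ℝ) : #(s.filter (a ≤ f ·)) * a ≤ ∑ i ∈ s, f i :=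
  calc (#(s.filter (a ≤ f ·)) : ℝ) * a ≤ ∑ i ∈ s.filter (a ≤ f ·), f i := by
        simpa only [nsmul_eq_mul] using card_nsmul_le_sum _ f a fun i hi => (mem_filter.mp hi).2
    _ ≤ ∑ i ∈ s, f i := sum_le_sum_of_subset_of_nonneg (filter_subset _ _) fun i hi _ => hf i hi

lemma Finset.card_filter_le_sum_div {ι : Type*} (s : Finset ι) {f : ι → ℝ}
    (hf : ∀ i ∈ s, 0 ≤ f i) {a : ℝ} (ha : 0 < a) :
    (#(s.filter (a ≤ f ·)) : ℝ) ≤ (∑ i ∈ s, f i) / a :=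
  (le_div_iff₀ ha).2 (card_filter_mul_le_sum s hf a)

namespace Matrix

variable {ι κ : Type*} [Fintype κ]

def IsListDisjunct (M : Matrix ι κ Bool) (d ℓ e : ℕ) : Prop :=
  ∀ S T : Finset κ, Disjoint S T → #S = d → #T = ℓ → ∀ X : Finset ι, #X ≤ e →
    ∃ j ∈ T, ∃ q, M q j = true ∧ q ∉ X ∧ ∀ j' ∈ S, M q j' = false

theorem IsListDisjunct.exists_mem_not_mem [DecidableEq κ] {M : Matrix ι κ Bool} {d ℓ e : ℕ}
    (hM : M.IsListDisjunct d ℓ e) (hdℓ : d + ℓ ≤ Fintype.card κ) {T : Finset κ}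
    (hT : #T = ℓ) {X : Finset ι} (hX : #X ≤ e) : ∃ j ∈ T, ∃ q ∉ X, M q j = true := by
  obtain ⟨S, hST, hS⟩ := exists_subset_card_eq (s := Tᶜ) (n := d) (by rw [card_compl]; omega)
  obtain ⟨j, hjT, q, hqj, hqX, -⟩ :=
    hM S T (disjoint_compl_left.mono_left hST) hS hT X hX
  exact ⟨j, hjT, q, hqX, hqj⟩

end Matrix

namespace HeavyHitters

variable {ι κ : Type*} [Fintype κ] (M : Matrix ι κ Bool) (x : κ → ℝ)

/-- The measurement `y_q = (M x)_q`. -/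
def sketch (q : ι) : ℝ :=
  ∑ j ∈ univ.filter (fun j => M q j = true), x j

/-- The estimate `x̂_j = min {y_q : M_{q,j} = 1}`. -/
noncomputable def estimate (j : κ) : ℝ :=
  sInf {v | ∃ q, M q j = true ∧ v = sketch M x q}

variable {M x}

theorem sketch_nonneg (hx : 0 ≤ x) (q : ι) : 0 ≤ sketch M x q :=
  sum_nonneg fun j _ => hx j

theorem estimate_le_sketch (hx : 0 ≤ x) {q : ι} {j : κ} (hqj : M q j = true) :
    estimate M x j ≤ sketch M x q :=
  csInf_le ⟨0, by rintro v ⟨q', -, rfl⟩; exact sketch_nonneg hx q'⟩ ⟨q, hqj, rfl⟩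

theorem le_estimate (hx : 0 ≤ x) {j : κ} (hj : ∃ q, M q j = true) : x j ≤ estimate M x j := by
  obtain ⟨q, hqj⟩ := hj
  refine le_csInf ⟨_, q, hqj, rfl⟩ ?_
  rintro v ⟨q', hq'j, rfl⟩
  exact single_le_sum (fun k _ => hx k) (mem_filter.mpr ⟨mem_univ j, hq'j⟩)

theorem sum_sketch_le [Fintype ι] {s : ℕ} (hx : 0 ≤ x) (hcol : ∀ j, #(univ.filter (M · j = true)) ≤ s) :
    ∑ q, sketch M x q ≤ s * ∑ j, x j := by
  have hswap : ∑ q, sketch M x q = ∑ j, #(univ.filter (M · j = true)) * x j := by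
    simp only [sketch, sum_filter]
    rw [sum_comm]
    simp only [← sum_filter, sum_const, nsmul_eq_mul]
  rw [hswap, mul_sum]
  gcongr with j
  · exact hx j
  · exact_mod_cast hcol j

theorem card_filter_le_sketch_le [Fintype ι] {s : ℕ} (hx : 0 ≤ x)
    (hcol : ∀ j, #(univ.filter (M · j = true)) ≤ s) {ε : ℝ} (hε : 0 < ε) (hN : 0 < ∑ j, x j) :
    #(univ.filter (ε * ∑ j, x j ≤ sketch M x ·)) ≤ ⌊(s : ℝ) / ε⌋₊ := by
  refine Nat.le_floor ?_
  calc (#(univ.filter (ε * ∑ j, x j ≤ sketch M x ·)) : ℝ)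
      ≤ (∑ q, sketch M x q) / (ε * ∑ j, x j) :=
        card_filter_le_sum_div _ (fun q _ => sketch_nonneg hx q) (mul_pos hε hN)
    _ ≤ s * (∑ j, x j) / (ε * ∑ j, x j) := by gcongr; exact sum_sketch_le hx hcol
    _ = s / ε := mul_div_mul_right _ _ hN.ne'

theorem exists_estimate_lt [Fintype ι] [DecidableEq κ] {s d ℓ : ℕ} {ε : ℝ}
    (hM : M.IsListDisjunct d ℓ ⌊(s : ℝ) / ε⌋₊) (hdℓ : d + ℓ ≤ Fintype.card κ)
    (hcol : ∀ j, #(univ.filter (M · j = true)) ≤ s) (hx : 0 ≤ x) (hε : 0 < ε)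
    (hN : 0 < ∑ j, x j) {T : Finset κ} (hT : #T = ℓ) :
    ∃ j ∈ T, estimate M x j < ε * ∑ j, x j := by
  obtain ⟨j, hjT, q, hqX, hqj⟩ :=
    hM.exists_mem_not_mem hdℓ hT (card_filter_le_sketch_le hx hcol hε hN)
  have hq : sketch M x q < ε * ∑ j, x j := by simpa using hqX
  exact ⟨j, hjT, (estimate_le_sketch hx hqj).trans_lt hq⟩

end HeavyHitters

open HeavyHitters in
theorem list_disjunct_heavy_hitters_general (ε c : ℝ) (hε0 : 0 < ε)
    (s m n : ℕ)
    (M : Matrix (Fin m) (Fin n) Bool)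
    (hcol : ∀ j : Fin n,
      1 ≤ (Finset.univ.filter (fun q => M q j = true)).card ∧
      (Finset.univ.filter (fun q => M q j = true)).card ≤ s)
    (hLD : ∀ Sset Tset : Finset (Fin n), Disjoint Sset Tset →
      Sset.card = ⌈1/ε⌉₊ → Tset.card = ⌈c/ε⌉₊ →
      ∀ X : Finset (Fin m), X.card ≤ ⌊(s : ℝ)/ε⌋₊ →
      ∃ j ∈ Tset, ∃ q : Fin m, M q j = true ∧ q ∉ X ∧ ∀ j' ∈ Sset, M q j' = false)
    (x : Fin n → ℝ) (hx : x ≠ 0) (hxpos : ∀ i, 0 ≤ x i) :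
    ∀ L : Finset (Fin n), ⌈c/ε⌉₊ + ⌈1/ε⌉₊ ≤ L.card →
      (∀ i ∈ L, ∀ j ∉ L,
        sInf {v : ℝ | ∃ q : Fin m, M q j = true ∧
          v = ∑ i' ∈ Finset.univ.filter (fun i' => M q i' = true), x i'} ≤
        sInf {v : ℝ | ∃ q : Fin m, M q i = true ∧
          v = ∑ i' ∈ Finset.univ.filter (fun i' => M q i' = true), x i'}) →
      ∀ i : Fin n, ε * (∑ j, |x j|) ≤ x i → i ∈ L := by
  intro L hL hest i hi
  by_contra hiL
  have hx0 : 0 ≤ x := hxpos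
  have hN : 0 < ∑ j, x j := Fintype.sum_pos (lt_of_le_of_ne hx0 (Ne.symm hx))
  simp only [abs_of_nonneg (hxpos _)] at hi
  obtain ⟨T, hTL, hT⟩ := exists_subset_card_eq (le_of_add_le_left hL)
  have hdℓ : ⌈1/ε⌉₊ + ⌈c/ε⌉₊ ≤ Fintype.card (Fin n) := by
    have := card_le_univ L
    omega
  obtain ⟨j, hjT, hj⟩ := exists_estimate_lt hLD hdℓ (fun j => (hcol j).2) hx0 hε0 hN hT
  have hi_col : ∃ q, M q i = true := by
    obtain ⟨q, hq⟩ := card_pos.mp (hcol i).1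
    exact ⟨q, (mem_filter.mp hq).2⟩
  have hji : estimate M x i ≤ estimate M x j := hest j (hTL hjT) i hiL
  linarith [le_estimate hx0 hi_col]

/-- Correctness of the heavy hitters scheme built from error-correcting list-disjunct
matrices: if the binary matrix `M` is `(⌈1/ε⌉, ⌈c/ε⌉, ⌊s/ε⌋)`-list-disjunct with column
sparsity between `1` and `s`, then any set of `⌈c/ε⌉ + ⌈1/ε⌉` coordinates with the
largest estimates contains every `ε`-heavy hitter of the nonnegative input. -/
theorem list_disjunct_heavy_hitters (ε c : ℝ) (hε0 : 0 < ε) (hε1 : ε < 1) (hc : 0 < c)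
    (s m n : ℕ) (hs : 0 < s) (hm : 0 < m) (hn : 0 < n)
    (M : Matrix (Fin m) (Fin n) Bool)
    (hcol : ∀ j : Fin n,
      1 ≤ (Finset.univ.filter (fun q => M q j = true)).card ∧
      (Finset.univ.filter (fun q => M q j = true)).card ≤ s)
    (hLD : ∀ Sset Tset : Finset (Fin n), Disjoint Sset Tset →
      Sset.card = ⌈1/ε⌉₊ → Tset.card = ⌈c/ε⌉₊ →
      ∀ X : Finset (Fin m), X.card ≤ ⌊(s : ℝ)/ε⌋₊ →
      ∃ j ∈ Tset, ∃ q : Fin m, M q j = true ∧ q ∉ X ∧ ∀ j' ∈ Sset, M q j' = false)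
    (x : Fin n → ℝ) (hx : x ≠ 0) (hxpos : ∀ i, 0 ≤ x i) :
    ∀ L : Finset (Fin n), ⌈c/ε⌉₊ + ⌈1/ε⌉₊ ≤ L.card →
      (∀ i ∈ L, ∀ j ∉ L,
        sInf {v : ℝ | ∃ q : Fin m, M q j = true ∧
          v = ∑ i' ∈ Finset.univ.filter (fun i' => M q i' = true), x i'} ≤
        sInf {v : ℝ | ∃ q : Fin m, M q i = true ∧
          v = ∑ i' ∈ Finset.univ.filter (fun i' => M q i' = true), x i'}) →
      ∀ i : Fin n, ε * (∑ j, |x j|) ≤ x i → i ∈ L :=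
  list_disjunct_heavy_hitters_general ε c hε0 s m n M hcol hLD x hx hxpos
end

section
/- Let a, b, c be positive integers, let ε ∈ (0,1), let κ be a positive integer, and let ζ ∈ (0,1) satisfy (2/ε + 1)·2^{−κ} + ζ < 1. Let Con : {0,1}^a × {0,1}^b → {0,1}^c be a lossless (κ, ζ)-condenser, and set n = 2^a. Let x ∈ ℝ^n (indexed by {0,1}^a) be nonzero with nonnegative coordinates; define counters C_{j,w} = Σ_{i ∈ {0,1}^a : Con(i,j)=w} x_i for j ∈ {0,1}^b and w ∈ {0,1}^c, and estimates x̂_i = min_{j ∈ {0,1}^b} C_{j, Con(i,j)}. Then every set L ⊆ {0,1}^a with |L| ≥ 2^κ + ⌈1/ε⌉ such that x̂_i ≥ x̂_j for all i ∈ L and j ∉ L contains every index i with x_i ≥ ε·‖x‖₁. -/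
/-!
Suppose a heavy coordinate `i₀` is missing from `L`. Every `i ∈ L` then has estimate at least
that of `i₀`, which is at least `x i₀ ≥ ε‖x‖₁`. Feed the condenser the uniform distribution on
`2^κ` elements of `L`: every (seed, output) pair it can produce is a counter of value at least
`ε‖x‖₁`, and since each seed's counters add up to `‖x‖₁` there are at most `2^b/ε` such pairs.
A distribution of min-entropy `b + κ` gives them mass at most `2^{-κ}/ε`, so the condenser error
is at least `1 - 2^{-κ}/ε`, contradicting `(2/ε + 1)·2^{-κ} + ζ < 1`.
-/

open Finset

theorem sum_sub_sum_le_half_sum_abs_sub {ι : Type*} [Fintype ι] {P q : ι → ℝ}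
    (h : ∑ v, P v = ∑ v, q v) (E : Finset ι) :
    ∑ v ∈ E, P v - ∑ v ∈ E, q v ≤ (1 / 2) * ∑ v, |P v - q v| := by
  classical
  have hE : ∑ v ∈ E, (P v - q v) ≤ ∑ v ∈ E, |P v - q v| :=
    sum_le_sum fun v _ => le_abs_self _
  have hEc : -∑ v ∈ univ \ E, (P v - q v) ≤ ∑ v ∈ univ \ E, |P v - q v| := by
    rw [← sum_neg_distrib]
    exact sum_le_sum fun v _ => neg_le_abs _
  have hsplit : ∀ f : ι → ℝ, ∑ v ∈ univ \ E, f v + ∑ v ∈ E, f v = ∑ v, f v :=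
    fun f => sum_sdiff E.subset_univ
  have := hsplit fun v => P v - q v
  have := hsplit fun v => |P v - q v|
  simp only [sum_sub_distrib] at *
  linarith

theorem sum_ite_mem_inv_card {α : Type*} [Fintype α] [DecidableEq α] {S : Finset α}
    (hS : S.Nonempty) : ∑ i, (if i ∈ S then (#S : ℝ)⁻¹ else 0) = 1 := by
  rw [sum_ite_mem, univ_inter, sum_const, nsmul_eq_mul]
  exact mul_inv_cancel₀ (by exact_mod_cast hS.card_pos.ne')

namespace CondenserSketch

variable {α β γ : Type*} [Fintype α] [DecidableEq γ]

/-- The counter `C_{j,w}`, indexed by the pair `v = (j, w)`. -/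
noncomputable def counter (Con : α → β → γ) (x : α → ℝ) (v : β × γ) : ℝ :=
  ∑ i ∈ univ.filter (fun i => Con i v.1 = v.2), x i

noncomputable def estimate (Con : α → β → γ) (x : α → ℝ) (i : α) : ℝ :=
  ⨅ j, counter Con x (j, Con i j)

variable (Con : α → β → γ) {x : α → ℝ}

theorem counter_nonneg (hx : ∀ i, 0 ≤ x i) (v : β × γ) : 0 ≤ counter Con x v :=
  sum_nonneg fun i _ => hx i

theorem sum_counter [Fintype β] [Fintype γ] (x : α → ℝ) :
    ∑ v, counter Con x v = Fintype.card β * ∑ i, x i := by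
  rw [Fintype.sum_prod_type]
  simp only [counter, sum_fiberwise, sum_const, card_univ, nsmul_eq_mul]

theorem le_estimate [Nonempty β] (hx : ∀ i, 0 ≤ x i) (i : α) : x i ≤ estimate Con x i :=
  le_ciInf fun j => single_le_sum (fun i' _ => hx i') (by simp)

theorem estimate_le_counter [Finite β] (x : α → ℝ) (i : α) (j : β) :
    estimate Con x i ≤ counter Con x (j, Con i j) :=
  ciInf_le (Set.finite_range _).bddBelow j

theorem card_le_counter_mul_le [Fintype β] [Fintype γ] (hx : ∀ i, 0 ≤ x i) (t : ℝ) :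
    #(univ.filter fun v => t ≤ counter Con x v) * t ≤ Fintype.card β * ∑ i, x i := by
  rw [← sum_counter Con x, ← nsmul_eq_mul]
  calc _ ≤ ∑ v ∈ univ.filter fun v => t ≤ counter Con x v, counter Con x v :=
        card_nsmul_le_sum _ _ _ fun v hv => (mem_filter.mp hv).2
    _ ≤ ∑ v, counter Con x v :=
        sum_le_sum_of_subset_of_nonneg (subset_univ _) fun v _ _ => counter_nonneg Con hx v

theorem counter_eq_zero_of_lt [Finite β] {p : α → ℝ} {t : ℝ}
    (hp : ∀ i, p i ≠ 0 → t ≤ estimate Con x i) {v : β × γ} (hv : counter Con x v < t) :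
    counter Con p v = 0 := by
  obtain ⟨j, w⟩ := v
  refine sum_eq_zero fun i hi => ?_
  by_contra hpi
  obtain rfl : Con i j = w := (mem_filter.mp hi).2
  exact (hp i hpi).not_gt ((estimate_le_counter Con x i j).trans_lt hv)

theorem one_sub_le_half_sum_abs_sub_of_le_estimate [Fintype β] [Nonempty β] [Fintype γ]
    (hx : ∀ i, 0 ≤ x i) {t : ℝ} (ht : 0 < t) {p : α → ℝ} (hp1 : ∑ i, p i = 1)
    (hp : ∀ i, p i ≠ 0 → t ≤ estimate Con x i)
    {q : β × γ → ℝ} {m : ℝ} (hm : 0 ≤ m) (hq1 : ∑ v, q v = 1) (hqm : ∀ v, q v ≤ m) :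
    1 - Fintype.card β * (∑ i, x i) / t * m ≤
      (1 / 2) * ∑ v, |(Fintype.card β : ℝ)⁻¹ * counter Con p v - q v| := by
  set E := univ.filter fun v => t ≤ counter Con x v
  have hβ : (Fintype.card β : ℝ) ≠ 0 := by positivity
  have hP1 : ∑ v, (Fintype.card β : ℝ)⁻¹ * counter Con p v = 1 := by
    rw [← mul_sum, sum_counter, hp1, mul_one, inv_mul_cancel₀ hβ]
  have hPE : ∑ v ∈ E, (Fintype.card β : ℝ)⁻¹ * counter Con p v = 1 := by
    rw [← hP1]
    refine sum_subset (subset_univ _) fun v _ hv => ?_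
    rw [counter_eq_zero_of_lt Con hp (not_le.mp fun h => hv (by simpa [E] using h)), mul_zero]
  have hqE : ∑ v ∈ E, q v ≤ #E * m := by
    simpa using sum_le_sum fun v (_ : v ∈ E) => hqm v
  have hcard : (#E : ℝ) ≤ Fintype.card β * (∑ i, x i) / t :=
    (le_div_iff₀ ht).mpr (card_le_counter_mul_le Con hx t)
  have htv := sum_sub_sum_le_half_sum_abs_sub (hP1.trans hq1.symm) E
  rw [hPE] at htv
  nlinarith [mul_le_mul_of_nonneg_right hcard hm]

end CondenserSketch

open CondenserSketch in
theorem condenser_heavy_hitters_general (a b c κ : ℕ)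
    (ε ζ : ℝ) (hε0 : 0 < ε)
    (hparam : (2/ε + 1) * ((2:ℝ)^κ)⁻¹ + ζ < 1)
    (Con : (Fin a → Bool) → (Fin b → Bool) → (Fin c → Bool))
    -- `Con` is a lossless (κ, ζ)-condenser: for every source distribution `p` of
    -- min-entropy ≥ κ, the joint distribution of (seed, output) is ζ-close in total
    -- variation to some distribution `q` of min-entropy ≥ b + κ
    (hcond : ∀ p : (Fin a → Bool) → ℝ,
      (∀ i, 0 ≤ p i) → (∑ i, p i = 1) → (∀ i, p i ≤ ((2:ℝ)^κ)⁻¹) →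
      ∃ q : (Fin b → Bool) × (Fin c → Bool) → ℝ,
        (∀ v, 0 ≤ q v) ∧ (∑ v, q v = 1) ∧ (∀ v, q v ≤ ((2:ℝ)^(b+κ))⁻¹) ∧
        (1/2) * ∑ v : (Fin b → Bool) × (Fin c → Bool),
          |((2:ℝ)^b)⁻¹ * (∑ i ∈ Finset.univ.filter (fun i => Con i v.1 = v.2), p i)
            - q v| ≤ ζ)
    (x : (Fin a → Bool) → ℝ) (hx : x ≠ 0) (hxpos : ∀ i, 0 ≤ x i) :
    ∀ L : Finset (Fin a → Bool), 2^κ + ⌈1/ε⌉₊ ≤ L.card →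
      (∀ i ∈ L, ∀ j ∉ L,
        (⨅ j' : Fin b → Bool,
          ∑ i' ∈ Finset.univ.filter (fun i' => Con i' j' = Con j j'), x i') ≤
        (⨅ j' : Fin b → Bool,
          ∑ i' ∈ Finset.univ.filter (fun i' => Con i' j' = Con i j'), x i')) →
      ∀ i, ε * (∑ j, |x j|) ≤ x i → i ∈ L := by
  intro L hL hord i₀ hheavy
  by_contra hi₀
  obtain ⟨S, hSL, hS⟩ := exists_subset_card_eq ((Nat.le_add_right _ _).trans hL)
  have hScard : (#S : ℝ) = 2 ^ κ := by exact_mod_cast hS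
  have hN : 0 < ∑ j, x j := by
    obtain ⟨i, hi⟩ := Function.ne_iff.mp hx
    exact sum_pos' (fun j _ => hxpos j) ⟨i, mem_univ i, (hxpos i).lt_of_ne' hi⟩
  simp only [abs_of_nonneg (hxpos _)] at hheavy
  set p := fun i => if i ∈ S then (#S : ℝ)⁻¹ else 0
  have hp1 : ∑ i, p i = 1 := sum_ite_mem_inv_card (card_pos.mp (by rw [hS]; positivity))
  have hp : ∀ i, p i ≠ 0 → ε * ∑ j, x j ≤ estimate Con x i := fun i hi =>
    hheavy.trans ((le_estimate Con hxpos i₀).trans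
      (hord i (hSL (by by_contra h; simp [p, h] at hi)) i₀ hi₀))
  obtain ⟨q, -, hq1, hqm, htv⟩ := hcond p (fun i => by simp only [p]; split_ifs <;> positivity) hp1
    (fun i => by simp only [p, ← hScard]; split_ifs; exacts [le_rfl, by positivity])
  have key := one_sub_le_half_sum_abs_sub_of_le_estimate Con hxpos (by positivity) hp1 hp
    (by positivity) hq1 hqm
  have hβ : (Fintype.card (Fin b → Bool) : ℝ) = 2 ^ b := by simp
  rw [hβ] at key
  replace key := key.trans htv
  have hmass : (2:ℝ) ^ b * (∑ j, x j) / (ε * ∑ j, x j) * ((2:ℝ) ^ (b + κ))⁻¹ =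
      ((2:ℝ) ^ κ)⁻¹ / ε := by
    rw [pow_add]; field_simp
  have hsplit : (2 / ε + 1) * ((2:ℝ) ^ κ)⁻¹ = 2 * (((2:ℝ) ^ κ)⁻¹ / ε) + ((2:ℝ) ^ κ)⁻¹ := by
    ring
  have : 0 < ((2:ℝ) ^ κ)⁻¹ / ε := by positivity
  linarith [inv_pos.mpr (pow_pos two_pos κ : (0:ℝ) < 2 ^ κ)]

/-- Correctness of the heavy hitters scheme built from a lossless `(κ, ζ)`-condenser
`Con : {0,1}^a × {0,1}^b → {0,1}^c` in the strict turnstile model: if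
`(2/ε + 1)·2^{−κ} + ζ < 1`, then any set of `2^κ + ⌈1/ε⌉` coordinates with the largest
Count-Min-style estimates contains every `ε`-heavy hitter of the nonnegative input. -/
theorem condenser_heavy_hitters (a b c κ : ℕ) (ha : 0 < a) (hb : 0 < b) (hc : 0 < c)
    (hκ : 0 < κ) (ε ζ : ℝ) (hε0 : 0 < ε) (hε1 : ε < 1) (hζ0 : 0 < ζ) (hζ1 : ζ < 1)
    (hparam : (2/ε + 1) * ((2:ℝ)^κ)⁻¹ + ζ < 1)
    (Con : (Fin a → Bool) → (Fin b → Bool) → (Fin c → Bool))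
    -- `Con` is a lossless (κ, ζ)-condenser: for every source distribution `p` of
    -- min-entropy ≥ κ, the joint distribution of (seed, output) is ζ-close in total
    -- variation to some distribution `q` of min-entropy ≥ b + κ
    (hcond : ∀ p : (Fin a → Bool) → ℝ,
      (∀ i, 0 ≤ p i) → (∑ i, p i = 1) → (∀ i, p i ≤ ((2:ℝ)^κ)⁻¹) →
      ∃ q : (Fin b → Bool) × (Fin c → Bool) → ℝ,
        (∀ v, 0 ≤ q v) ∧ (∑ v, q v = 1) ∧ (∀ v, q v ≤ ((2:ℝ)^(b+κ))⁻¹) ∧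
        (1/2) * ∑ v : (Fin b → Bool) × (Fin c → Bool),
          |((2:ℝ)^b)⁻¹ * (∑ i ∈ Finset.univ.filter (fun i => Con i v.1 = v.2), p i)
            - q v| ≤ ζ)
    (x : (Fin a → Bool) → ℝ) (hx : x ≠ 0) (hxpos : ∀ i, 0 ≤ x i) :
    ∀ L : Finset (Fin a → Bool), 2^κ + ⌈1/ε⌉₊ ≤ L.card →
      (∀ i ∈ L, ∀ j ∉ L,
        (⨅ j' : Fin b → Bool,
          ∑ i' ∈ Finset.univ.filter (fun i' => Con i' j' = Con j j'), x i') ≤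
        (⨅ j' : Fin b → Bool,
          ∑ i' ∈ Finset.univ.filter (fun i' => Con i' j' = Con i j'), x i')) →
      ∀ i, ε * (∑ j, |x j|) ≤ x i → i ∈ L :=
  condenser_heavy_hitters_general a b c κ ε ζ hε0 hparam Con hcond x hx hxpos
end
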